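/- arXiv:1806.06936 — 8 statements merged into one kernel-verified Lean document; each statement's English description precedes it below -/
import Mathlib

section
/- Let D ⊆ ℝ be an open convex set, let q : ℝ → ℝ be a quadratic polynomial (so q''' ≡ 0), and let f : ℝ → ℝ be three times differentiable on D with f self-concordant on D, i.e. |f'''(x)| ≤ 2·(f''(x))^{3/2} and f''(x) ≥ 0 for all x ∈ D. Assume q + f is convex on D, i.e. q''(x) + f''(x) ≥ 0 for all x ∈ D. Then the function g(x) := 8·(q(x) + 2·f(x)) is self-concordant on D, i.e. |g'''(x)| ≤ 2·(g''(x))^{3/2} and g''(x) ≥ 0 for all x ∈ D. -/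
/-!
Write `g = 8 (q + 2 f)`. Since `q''' = 0`, we have `g''' = 16 f'''`, while convexity of `q + f`
(`2a + f'' ≥ 0`) gives `g'' = 16 (a + f'') ≥ 8 f''`. Hence
`|g'''| ≤ 32 (f'')^{3/2} ≤ 32 (g''/8)^{3/2} = √2 (g'')^{3/2}`, as `16² ≤ 8³`.
-/

open Set

def SelfConcordantOn (h : ℝ → ℝ) (D : Set ℝ) : Prop :=
  ∀ x ∈ D, 0 ≤ deriv (deriv h) x ∧
    |deriv (deriv (deriv h)) x| ≤ 2 * (deriv (deriv h) x) ^ ((3 : ℝ) / 2)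

lemma le_rpow_three_halves_of_sq_le_pow_three {c s : ℝ} (hc : 0 ≤ c) (hs : 0 ≤ s)
    (h : c ^ 2 ≤ s ^ 3) : c ≤ s ^ ((3 : ℝ) / 2) := by
  rw [← Real.sqrt_sq hc, show (3 / 2 : ℝ) = 3 * (1 / 2) by norm_num, Real.rpow_mul hs,
    ← Real.sqrt_eq_rpow]
  norm_cast
  exact Real.sqrt_le_sqrt h

lemma abs_mul_le_two_mul_rpow_three_halves {A B G c s : ℝ} (hc : 0 ≤ c) (hs : 0 ≤ s)
    (hcs : c ^ 2 ≤ s ^ 3) (hA : 0 ≤ A) (hB : |B| ≤ 2 * A ^ ((3 : ℝ) / 2)) (hG : s * A ≤ G) :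
    |c * B| ≤ 2 * G ^ ((3 : ℝ) / 2) :=
  calc |c * B| = c * |B| := by rw [abs_mul, abs_of_nonneg hc]
    _ ≤ c * (2 * A ^ ((3 : ℝ) / 2)) := by gcongr
    _ = 2 * (c * A ^ ((3 : ℝ) / 2)) := by ring
    _ ≤ 2 * (s ^ ((3 : ℝ) / 2) * A ^ ((3 : ℝ) / 2)) := by
      gcongr; exact le_rpow_three_halves_of_sq_le_pow_three hc hs hcs
    _ = 2 * (s * A) ^ ((3 : ℝ) / 2) := by rw [Real.mul_rpow hs hA]
    _ ≤ 2 * G ^ ((3 : ℝ) / 2) := by gcongr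

lemma SelfConcordantOn.of_deriv_deriv_le {f g : ℝ → ℝ} {D : Set ℝ} {c s : ℝ}
    (hf : SelfConcordantOn f D) (hc : 0 ≤ c) (hs : 0 ≤ s) (hcs : c ^ 2 ≤ s ^ 3)
    (h2 : ∀ x ∈ D, s * deriv (deriv f) x ≤ deriv (deriv g) x)
    (h3 : ∀ x ∈ D, deriv (deriv (deriv g)) x = c * deriv (deriv (deriv f)) x) :
    SelfConcordantOn g D := by
  intro x hx
  obtain ⟨hf2, hf3⟩ := hf x hx
  refine ⟨(mul_nonneg hs hf2).trans (h2 x hx), ?_⟩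
  rw [h3 x hx]
  exact abs_mul_le_two_mul_rpow_three_halves hc hs hcs hf2 hf3 (h2 x hx)

theorem stmt_0_general (D : Set ℝ) (hD : IsOpen D)
    (q f : ℝ → ℝ) (a b c : ℝ)
    (hq : ∀ x, q x = a * x ^ 2 + b * x + c)
    (hf1 : ∀ x ∈ D, DifferentiableAt ℝ f x)
    (hf2 : ∀ x ∈ D, DifferentiableAt ℝ (deriv f) x)
    (hfsc : ∀ x ∈ D, 0 ≤ deriv (deriv f) x ∧
      |deriv (deriv (deriv f)) x| ≤ 2 * (deriv (deriv f) x) ^ ((3 : ℝ) / 2))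
    (hconv : ∀ x ∈ D, 0 ≤ deriv (deriv q) x + deriv (deriv f) x) :
    ∀ x ∈ D, 0 ≤ deriv (deriv (fun y => 8 * (q y + 2 * f y))) x ∧
      |deriv (deriv (deriv (fun y => 8 * (q y + 2 * f y)))) x| ≤
        2 * (deriv (deriv (fun y => 8 * (q y + 2 * f y))) x) ^ ((3 : ℝ) / 2) := by
  obtain rfl : q = fun y => a * y ^ 2 + b * y + c := funext hq
  have hq1 : deriv (fun y => a * y ^ 2 + b * y + c) = fun y => 2 * a * y + b := by
    funext y; simp (disch := fun_prop); ring
  have hq2 (x : ℝ) : deriv (fun y => 2 * a * y + b) x = 2 * a := by simp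
  have hg1 : EqOn (deriv fun y => 8 * ((a * y ^ 2 + b * y + c) + 2 * f y))
      (fun y => 16 * a * y + 8 * b + 16 * deriv f y) D := fun y hy => by
    have hfy := hf1 y hy
    simp (disch := fun_prop); ring
  have hg2 : EqOn (deriv (deriv fun y => 8 * ((a * y ^ 2 + b * y + c) + 2 * f y)))
      (fun y => 16 * a + 16 * deriv (deriv f) y) D := fun y hy => by
    have hf'y := hf2 y hy
    rw [hg1.deriv hD hy]
    simp (disch := fun_prop)
  refine SelfConcordantOn.of_deriv_deriv_le (c := 16) (s := 8) hfsc (by norm_num) (by norm_num)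
    (by norm_num) (fun x hx => ?_) (fun x hx => ?_)
  · have hconvx := hconv x hx
    rw [hq1, hq2] at hconvx
    rw [hg2 hx]
    linarith
  · rw [hg2.deriv hD hx]
    simp

/-- If `q` is a quadratic polynomial, `f` is three times differentiable and
self-concordant on an open convex set `D ⊆ ℝ`, and `q + f` is convex on `D`
(in the sense `q'' + f'' ≥ 0` on `D`), then `g := 8·(q + 2·f)` is self-concordant on `D`. -/
theorem stmt_0 (D : Set ℝ) (hD : IsOpen D) (hDconv : Convex ℝ D)
    (q f : ℝ → ℝ) (a b c : ℝ)
    (hq : ∀ x, q x = a * x ^ 2 + b * x + c)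
    (hf1 : ∀ x ∈ D, DifferentiableAt ℝ f x)
    (hf2 : ∀ x ∈ D, DifferentiableAt ℝ (deriv f) x)
    (hf3 : ∀ x ∈ D, DifferentiableAt ℝ (deriv (deriv f)) x)
    (hfsc : ∀ x ∈ D, 0 ≤ deriv (deriv f) x ∧
      |deriv (deriv (deriv f)) x| ≤ 2 * (deriv (deriv f) x) ^ ((3 : ℝ) / 2))
    (hconv : ∀ x ∈ D, 0 ≤ deriv (deriv q) x + deriv (deriv f) x) :
    ∀ x ∈ D, 0 ≤ deriv (deriv (fun y => 8 * (q y + 2 * f y))) x ∧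
      |deriv (deriv (deriv (fun y => 8 * (q y + 2 * f y)))) x| ≤
        2 * (deriv (deriv (fun y => 8 * (q y + 2 * f y))) x) ^ ((3 : ℝ) / 2) :=
  stmt_0_general D hD q f a b c hq hf1 hf2 hfsc hconv
end

section
/- Let D ⊆ ℝⁿ be an open convex set, let q : ℝⁿ → ℝ be a quadratic function q(x) = ½·xᵀAx + bᵀx + β with A symmetric, and let f : ℝⁿ → ℝ be three times continuously differentiable and self-concordant on D. Assume q + f is convex on D. Then g(x) := 8·(q(x) + 2·f(x)) is self-concordant on D. -/
/-!
Fix `x ∈ D` and a direction `v`, and write `s = D²q(x)[v,v]`, `a = D²f(x)[v,v]`,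
`T = D³f(x)[v,v,v]`. As `q` is quadratic, `D³q = 0`, so `D²g(x)[v,v] = 8(s + 2a)` and
`D³g(x)[v,v,v] = 16T`. Convexity of `q + f` gives `s + a ≥ 0`, hence `D²g(x)[v,v] ≥ 8a ≥ 0`, and
`16|T| ≤ 32a^{3/2} ≤ 2(8a)^{3/2} ≤ 2(D²g(x)[v,v])^{3/2}` because `8^{3/2} ≥ 16`.
-/

open Set Filter
open scoped ContDiff

lemma ConvexOn.deriv2_nonneg_of_hasDerivAt {S : Set ℝ} (hS : IsOpen S) {φ φ' : ℝ → ℝ}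
    (hφ : ConvexOn ℝ S φ) (hφ' : ∀ t ∈ S, HasDerivAt φ (φ' t) t) {t : ℝ} (ht : t ∈ S) {d : ℝ}
    (hd : HasDerivAt φ' d t) : 0 ≤ d := by
  have hmono : MonotoneOn φ' S := by
    intro u hu w hw huw
    rw [← (hφ' u hu).deriv, ← (hφ' w hw).deriv]
    exact hφ.monotoneOn_deriv (fun s hs => (hφ' s hs).differentiableAt) hu hw huw
  have hacc : AccPt t (𝓟 S) := by
    simpa using (PerfectSpace.univ_preperfect t (mem_univ t)).nhds_inter (hS.mem_nhds ht)
  exact hd.hasDerivWithinAt.nonneg_of_monotoneOn hacc hmono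

lemma ConvexOn.iteratedFDeriv_two_nonneg {E : Type*} [NormedAddCommGroup E] [NormedSpace ℝ E]
    {D : Set E} (hD : IsOpen D) {h : E → ℝ} (hconv : ConvexOn ℝ D h) (hh : ContDiffOn ℝ 2 h D)
    {x : E} (hx : x ∈ D) (v : E) : 0 ≤ iteratedFDeriv ℝ 2 h x ![v, v] := by
  let line : ℝ →ᵃ[ℝ] E := AffineMap.lineMap x (x + v)
  have hline : ∀ t : ℝ, HasDerivAt line v t := fun t => by
    simpa [line] using AffineMap.hasDerivAt_lineMap (a := x) (b := x + v) (x := t)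
  have hd2 : HasFDerivAt (fderiv ℝ h) (fderiv ℝ (fderiv ℝ h) x) (line 0) := by
    simpa [line] using ((hh.contDiffAt (hD.mem_nhds hx)).fderiv_right (m := 1) le_rfl
      |>.differentiableAt one_ne_zero).hasFDerivAt
  rw [iteratedFDeriv_two_apply]
  refine (hconv.comp_affineMap line).deriv2_nonneg_of_hasDerivAt
    (φ' := fun t => fderiv ℝ h (line t) v) (hD.preimage AffineMap.lineMap_continuous)
    (fun t ht => ?_) (t := 0) (by simpa [line] using hx) ?_
  · exact ((hh.contDiffAt (hD.mem_nhds ht)).differentiableAt two_ne_zero).hasFDerivAt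
      |>.comp_hasDerivAt t (hline t)
  · exact (ContinuousLinearMap.apply ℝ ℝ v).hasFDerivAt.comp_hasDerivAt 0
      (hd2.comp_hasDerivAt 0 (hline 0))

section AffineDerivative

variable {𝕜 E F : Type*} [NontriviallyNormedField 𝕜] [NormedAddCommGroup E] [NormedSpace 𝕜 E]
  [NormedAddCommGroup F] [NormedSpace 𝕜 F] {q : E → F} {N : E →L[𝕜] E →L[𝕜] F} {c : E →L[𝕜] F}

lemma fderiv_eq_of_hasFDerivAt_affine (hq : ∀ x, HasFDerivAt q (N x + c) x) :
    fderiv 𝕜 q = fun x => N x + c :=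
  funext fun x => (hq x).fderiv

lemma contDiff_of_hasFDerivAt_affine (hq : ∀ x, HasFDerivAt q (N x + c) x) :
    ContDiff 𝕜 ∞ q := by
  rw [contDiff_infty_iff_fderiv, fderiv_eq_of_hasFDerivAt_affine hq]
  exact ⟨fun x => (hq x).differentiableAt, N.contDiff.add contDiff_const⟩

lemma iteratedFDeriv_three_eq_zero_of_hasFDerivAt_affine
    (hq : ∀ x, HasFDerivAt q (N x + c) x) (x : E) (m : Fin 3 → E) :
    iteratedFDeriv 𝕜 3 q x m = 0 := by
  have hq2 : fderiv 𝕜 (fderiv 𝕜 q) = fun _ => N := by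
    rw [fderiv_eq_of_hasFDerivAt_affine hq]
    exact funext fun y => (N.hasFDerivAt.add_const c).fderiv
  rw [iteratedFDeriv_succ_apply_right, iteratedFDeriv_two_apply, hq2]
  simp

end AffineDerivative

lemma exists_hasFDerivAt_affine_quadratic {n : ℕ} (A : Matrix (Fin n) (Fin n) ℝ)
    (b : Fin n → ℝ) (β : ℝ) :
    ∃ (N : EuclideanSpace ℝ (Fin n) →L[ℝ] EuclideanSpace ℝ (Fin n) →L[ℝ] ℝ)
      (c : EuclideanSpace ℝ (Fin n) →L[ℝ] ℝ), ∀ x, HasFDerivAt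
        (fun x : EuclideanSpace ℝ (Fin n) =>
          (1 / 2) * ∑ i, ∑ j, A i j * x i * x j + ∑ i, b i * x i + β) (N x + c) x := by
  let P : Fin n → EuclideanSpace ℝ (Fin n) →L[ℝ] ℝ := EuclideanSpace.proj
  refine ⟨(1 / 2 : ℝ) • ∑ i, ∑ j, A i j • ((P i).smulRight (P j) + (P j).smulRight (P i)),
    ∑ i, b i • P i, fun x => ?_⟩
  have hderiv : HasFDerivAt (fun x : EuclideanSpace ℝ (Fin n) =>
        (1 / 2) * ∑ i, ∑ j, A i j * x i * x j + ∑ i, b i * x i + β)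
      ((1 / 2 : ℝ) • ∑ i, ∑ j, ((A i j * x i) • P j + x j • A i j • P i) + ∑ i, b i • P i) x :=
    (((HasFDerivAt.fun_sum fun i _ => HasFDerivAt.fun_sum fun j _ =>
      ((P i).hasFDerivAt.const_mul (A i j)).mul (P j).hasFDerivAt).const_mul (1 / 2 : ℝ)).add
    (HasFDerivAt.fun_sum fun i _ => (P i).hasFDerivAt.const_mul (b i))).add_const β
  convert hderiv using 1
  ext w
  simp only [P, add_apply, smul_apply, sum_apply, ContinuousLinearMap.smulRight_apply,
    PiLp.proj_apply, smul_eq_mul]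
  congr 2
  exact Finset.sum_congr rfl fun i _ => Finset.sum_congr rfl fun j _ => by ring

lemma iteratedFDeriv_const_mul_add_const_mul_apply {𝕜 E : Type*} [NontriviallyNormedField 𝕜]
    [NormedAddCommGroup E] [NormedSpace 𝕜 E] {k : ℕ} {q f : E → 𝕜} {x : E}
    (hq : ContDiffAt 𝕜 k q x) (hf : ContDiffAt 𝕜 k f x) (c d : 𝕜) (m : Fin k → E) :
    iteratedFDeriv 𝕜 k (fun y => c * (q y + d * f y)) x m =
      c * (iteratedFDeriv 𝕜 k q x m + d * iteratedFDeriv 𝕜 k f x m) := by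
  change iteratedFDeriv 𝕜 k (c • (q + d • f)) x m = _
  have hdf : ContDiffAt 𝕜 k (d • f) x := hf.const_smul d
  have hsum : ContDiffAt 𝕜 k (q + d • f) x := hq.add hdf
  rw [iteratedFDeriv_const_smul_apply hsum, iteratedFDeriv_add_apply hq hdf,
    iteratedFDeriv_const_smul_apply hf]
  rfl

lemma sixteen_le_eight_rpow_three_halves : (16 : ℝ) ≤ 8 ^ ((3 : ℝ) / 2) := by
  rw [show (3 : ℝ) / 2 = 1 + 1 / 2 by norm_num, Real.rpow_add (by norm_num), Real.rpow_one,
    ← Real.sqrt_eq_rpow]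
  have : (2 : ℝ) ≤ √8 := Real.le_sqrt_of_sq_le (by norm_num)
  linarith

lemma eight_mul_self_concordance_bounds {s a T : ℝ} (ha : 0 ≤ a) (hsa : 0 ≤ s + a)
    (hT : |T| ≤ 2 * a ^ ((3 : ℝ) / 2)) :
    0 ≤ 8 * (s + 2 * a) ∧ |8 * (2 * T)| ≤ 2 * (8 * (s + 2 * a)) ^ ((3 : ℝ) / 2) := by
  refine ⟨by linarith, ?_⟩
  have : 0 ≤ a ^ ((3 : ℝ) / 2) := by positivity
  calc |8 * (2 * T)| = 16 * |T| := by norm_num [abs_mul]; ring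
    _ ≤ 2 * (16 * a ^ ((3 : ℝ) / 2)) := by linarith
    _ ≤ 2 * (8 ^ ((3 : ℝ) / 2) * a ^ ((3 : ℝ) / 2)) := by
      gcongr; exact sixteen_le_eight_rpow_three_halves
    _ = 2 * (8 * a) ^ ((3 : ℝ) / 2) := by rw [Real.mul_rpow (by norm_num) ha]
    _ ≤ 2 * (8 * (s + 2 * a)) ^ ((3 : ℝ) / 2) := by gcongr; linarith

theorem stmt_1_general (n : ℕ) (D : Set (EuclideanSpace ℝ (Fin n)))
    (hD : IsOpen D)
    (A : Matrix (Fin n) (Fin n) ℝ) (b : Fin n → ℝ) (β : ℝ)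
    (q f : EuclideanSpace ℝ (Fin n) → ℝ)
    (hq : ∀ x, q x = (1 / 2) * ∑ i, ∑ j, A i j * x i * x j + ∑ i, b i * x i + β)
    (hf : ContDiffOn ℝ 3 f D)
    (hfsc : ∀ x ∈ D, ∀ v : EuclideanSpace ℝ (Fin n),
      0 ≤ iteratedFDeriv ℝ 2 f x ![v, v] ∧
      |iteratedFDeriv ℝ 3 f x ![v, v, v]| ≤
        2 * (iteratedFDeriv ℝ 2 f x ![v, v]) ^ ((3 : ℝ) / 2))
    (hconv : ConvexOn ℝ D (fun x => q x + f x)) :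
    ∀ x ∈ D, ∀ v : EuclideanSpace ℝ (Fin n),
      0 ≤ iteratedFDeriv ℝ 2 (fun y => 8 * (q y + 2 * f y)) x ![v, v] ∧
      |iteratedFDeriv ℝ 3 (fun y => 8 * (q y + 2 * f y)) x ![v, v, v]| ≤
        2 * (iteratedFDeriv ℝ 2 (fun y => 8 * (q y + 2 * f y)) x ![v, v]) ^ ((3 : ℝ) / 2) := by
  intro x hx v
  obtain ⟨N, c, hqN⟩ := exists_hasFDerivAt_affine_quadratic A b β
  rw [← funext hq] at hqN
  have hqC : ContDiff ℝ ∞ q := contDiff_of_hasFDerivAt_affine hqN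
  have hfx : ContDiffAt ℝ 3 f x := hf.contDiffAt (hD.mem_nhds hx)
  have hq2 : ContDiffAt ℝ 2 q x := hqC.contDiffAt.of_le (by norm_cast)
  have hsum : 0 ≤ iteratedFDeriv ℝ 2 q x ![v, v] + iteratedFDeriv ℝ 2 f x ![v, v] := by
    have := hconv.iteratedFDeriv_two_nonneg hD
      ((hqC.contDiffOn.of_le (by norm_cast)).add (hf.of_le (by norm_num))) hx v
    rwa [fun_iteratedFDeriv_add_apply hq2 (hfx.of_le (by norm_num))] at this
  rw [iteratedFDeriv_const_mul_add_const_mul_apply hq2 (hfx.of_le (by norm_num)),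
    iteratedFDeriv_const_mul_add_const_mul_apply (hqC.contDiffAt.of_le (by norm_cast)) hfx,
    iteratedFDeriv_three_eq_zero_of_hasFDerivAt_affine hqN, zero_add]
  exact eight_mul_self_concordance_bounds (hfsc x hx v).1 hsum (hfsc x hx v).2

/-- Let `D ⊆ ℝⁿ` be open and convex, `q(x) = ½·xᵀAx + bᵀx + β` with `A`
symmetric, and `f` three times continuously differentiable and self-concordant on `D`
(in the directional-derivative sense). If `q + f` is convex on `D`, then
`g := 8·(q + 2·f)` is self-concordant on `D`. -/
theorem stmt_1 (n : ℕ) (D : Set (EuclideanSpace ℝ (Fin n)))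
    (hD : IsOpen D) (hDconv : Convex ℝ D)
    (A : Matrix (Fin n) (Fin n) ℝ) (hA : A.IsSymm) (b : Fin n → ℝ) (β : ℝ)
    (q f : EuclideanSpace ℝ (Fin n) → ℝ)
    (hq : ∀ x, q x = (1 / 2) * ∑ i, ∑ j, A i j * x i * x j + ∑ i, b i * x i + β)
    (hf : ContDiffOn ℝ 3 f D)
    (hfsc : ∀ x ∈ D, ∀ v : EuclideanSpace ℝ (Fin n),
      0 ≤ iteratedFDeriv ℝ 2 f x ![v, v] ∧
      |iteratedFDeriv ℝ 3 f x ![v, v, v]| ≤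
        2 * (iteratedFDeriv ℝ 2 f x ![v, v]) ^ ((3 : ℝ) / 2))
    (hconv : ConvexOn ℝ D (fun x => q x + f x)) :
    ∀ x ∈ D, ∀ v : EuclideanSpace ℝ (Fin n),
      0 ≤ iteratedFDeriv ℝ 2 (fun y => 8 * (q y + 2 * f y)) x ![v, v] ∧
      |iteratedFDeriv ℝ 3 (fun y => 8 * (q y + 2 * f y)) x ![v, v, v]| ≤
        2 * (iteratedFDeriv ℝ 2 (fun y => 8 * (q y + 2 * f y)) x ![v, v]) ^ ((3 : ℝ) / 2) :=
  stmt_1_general n D hD A b β q f hq hf hfsc hconv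
end

section
/- Let f : ℝⁿ → ℝ be twice continuously differentiable on an open set containing Ω and convex on Ω, and define g := f + Γ_Δ on Ω. Then for every x ∈ Ω and every v ∈ ℝⁿ, the second directional derivative satisfies D²g(x)[v,v] ≥ (2/Δ²)·‖v‖₂². Equivalently, the smallest eigenvalue of the Hessian ∇²g(x) is at least 2/Δ² for every x ∈ Ω. -/
/-!
Along a line `t ↦ x + t • v`, the second derivative of `f` is nonnegative because the derivative
of a convex function of one variable is monotone. The barrier `Γ_Δ` is a sum of one-variable
functions of the coordinates, so its Hessian is diagonal with entries
`1 / (Δ + x j) ^ 2 + 1 / (Δ - x j) ^ 2`; as `(Δ + x j) (Δ - x j) ≤ Δ ^ 2`, AM-GM bounds each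
entry below by `2 / Δ ^ 2`.
-/

open Filter Set Topology

section Line

variable {E : Type*} [NormedAddCommGroup E] [NormedSpace ℝ E]

lemma hasDerivAt_add_smul (x v : E) (t : ℝ) : HasDerivAt (fun s : ℝ => x + s • v) v t := by
  simpa using ((hasDerivAt_id t).smul_const v).const_add x

lemma hasDerivAt_comp_add_smul {g : E → ℝ} {x v : E} {t : ℝ}
    (hg : DifferentiableAt ℝ g (x + t • v)) :
    HasDerivAt (fun s : ℝ => g (x + s • v)) (fderiv ℝ g (x + t • v) v) t :=
  hg.hasFDerivAt.comp_hasDerivAt t (hasDerivAt_add_smul x v t)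

lemma hasDerivAt_fderiv_comp_add_smul {g : E → ℝ} {x : E} (hg : ContDiffAt ℝ 2 g x) (v : E) :
    HasDerivAt (fun t : ℝ => fderiv ℝ g (x + t • v) v) (iteratedFDeriv ℝ 2 g x ![v, v]) 0 := by
  have hD : HasFDerivAt (fderiv ℝ g) (fderiv ℝ (fderiv ℝ g) x) (x + (0 : ℝ) • v) := by
    rw [zero_smul, add_zero]
    exact ((hg.fderiv_right (by norm_num)).differentiableAt one_ne_zero).hasFDerivAt
  have hfderiv :
      HasDerivAt (fun t : ℝ => fderiv ℝ g (x + t • v)) (fderiv ℝ (fderiv ℝ g) x v) 0 :=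
    hD.comp_hasDerivAt 0 (hasDerivAt_add_smul x v 0)
  rw [iteratedFDeriv_two_apply]
  simpa using hfderiv.clm_apply (hasDerivAt_const (0 : ℝ) v)

theorem ConvexOn.iteratedFDeriv_two_nonneg_s4 {s : Set E} {f : E → ℝ} (hfs : ConvexOn ℝ s f)
    (hs : IsOpen s) (hf : ContDiffOn ℝ 2 f s) {x : E} (hx : x ∈ s) (v : E) :
    0 ≤ iteratedFDeriv ℝ 2 f x ![v, v] := by
  set L : ℝ →ᵃ[ℝ] E := AffineMap.lineMap x (x + v)
  have hL : ∀ t : ℝ, L t = x + t • v := fun t => by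
    simp [L, AffineMap.lineMap_apply, add_comm]
  have hP : L ⁻¹' s ∈ 𝓝 (0 : ℝ) :=
    (AffineMap.lineMap_continuous.isOpen_preimage s hs).mem_nhds (by simpa [hL] using hx)
  have hderiv : ∀ t ∈ L ⁻¹' s, HasDerivAt (f ∘ L) (fderiv ℝ f (x + t • v) v) t := by
    intro t ht
    rw [mem_preimage, hL] at ht
    simpa only [Function.comp_def, hL] using hasDerivAt_comp_add_smul
      ((hf.contDiffAt (hs.mem_nhds ht)).differentiableAt two_ne_zero)
  have hmono : MonotoneOn (deriv (f ∘ L)) (L ⁻¹' s) :=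
    (hfs.comp_affineMap L).monotoneOn_deriv fun t ht => (hderiv t ht).differentiableAt
  have hderiv2 : HasDerivAt (deriv (f ∘ L)) (iteratedFDeriv ℝ 2 f x ![v, v]) 0 := by
    refine (hasDerivAt_fderiv_comp_add_smul (hf.contDiffAt (hs.mem_nhds hx)) v)
      |>.congr_of_eventuallyEq ?_
    filter_upwards [hP] with t ht using (hderiv t ht).deriv
  have hacc : AccPt (0 : ℝ) (𝓟 (L ⁻¹' s)) := by
    simpa using (PerfectSpace.univ_preperfect 0 (mem_univ _)).nhds_inter hP
  exact hderiv2.hasDerivWithinAt.nonneg_of_monotoneOn hacc hmono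

end Line

theorem ContinuousLinearMap.iteratedFDeriv_comp_right_of_contDiffAt {𝕜 E F G : Type*}
    [NontriviallyNormedField 𝕜] [NormedAddCommGroup E] [NormedSpace 𝕜 E]
    [NormedAddCommGroup F] [NormedSpace 𝕜 F] [NormedAddCommGroup G] [NormedSpace 𝕜 G]
    (g : G →L[𝕜] E) {f : E → F} {x : G} {i : ℕ} (hf : ContDiffAt 𝕜 i f (g x)) :
    iteratedFDeriv 𝕜 i (f ∘ g) x =
      (iteratedFDeriv 𝕜 i f (g x)).compContinuousLinearMap fun _ => g := by
  obtain ⟨u, hu, hfu⟩ := hf.contDiffOn le_rfl (by simp)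
  have hgx : g x ∈ interior u := mem_interior_iff_mem_nhds.mpr hu
  have hopen : IsOpen (g ⁻¹' interior u) := isOpen_interior.preimage g.continuous
  rw [← iteratedFDerivWithin_of_isOpen i hopen hgx,
    ← iteratedFDerivWithin_of_isOpen i isOpen_interior hgx]
  exact g.iteratedFDerivWithin_comp_right (hfu.mono interior_subset)
    isOpen_interior.uniqueDiffOn hopen.uniqueDiffOn hgx le_rfl

lemma iteratedFDeriv_two_comp_clm_apply {E : Type*} [NormedAddCommGroup E] [NormedSpace ℝ E]
    (ℓ : E →L[ℝ] ℝ) {h : ℝ → ℝ} {x : E} (hh : ContDiffAt ℝ 2 h (ℓ x)) (v : E) :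
    iteratedFDeriv ℝ 2 (h ∘ ℓ) x ![v, v] = ℓ v ^ 2 * iteratedDeriv 2 h (ℓ x) := by
  rw [ℓ.iteratedFDeriv_comp_right_of_contDiffAt hh,
    ContinuousMultilinearMap.compContinuousLinearMap_apply,
    iteratedFDeriv_apply_eq_iteratedDeriv_mul_prod]
  simp [Fin.prod_univ_two, sq]

noncomputable def logBarrier (Δ s : ℝ) : ℝ := -(Real.log (Δ + s) + Real.log (Δ - s))

section LogBarrier

variable {Δ s : ℝ}

lemma hasDerivAt_logBarrier (hs : s ∈ Ioo (-Δ) Δ) :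
    HasDerivAt (logBarrier Δ) ((Δ - s)⁻¹ - (Δ + s)⁻¹) s := by
  have hplus : Δ + s ≠ 0 := by linarith [hs.1]
  have hminus : Δ - s ≠ 0 := by linarith [hs.2]
  have h := ((((hasDerivAt_id' s).const_add Δ).log hplus).fun_add
    (((hasDerivAt_id' s).const_sub Δ).log hminus)).fun_neg
  exact h.congr_deriv (by field_simp; ring)

lemma contDiffAt_logBarrier {n : WithTop ℕ∞} (hs : s ∈ Ioo (-Δ) Δ) :
    ContDiffAt ℝ n (logBarrier Δ) s := by
  have hplus : Δ + s ≠ 0 := by linarith [hs.1]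
  have hminus : Δ - s ≠ 0 := by linarith [hs.2]
  exact ((contDiffAt_const.add contDiffAt_id).log hplus).add
    ((contDiffAt_const.sub contDiffAt_id).log hminus) |>.neg

lemma iteratedDeriv_two_logBarrier (hs : s ∈ Ioo (-Δ) Δ) :
    iteratedDeriv 2 (logBarrier Δ) s = ((Δ + s) ^ 2)⁻¹ + ((Δ - s) ^ 2)⁻¹ := by
  have hplus : Δ + s ≠ 0 := by linarith [hs.1]
  have hminus : Δ - s ≠ 0 := by linarith [hs.2]
  have hderiv : deriv (logBarrier Δ) =ᶠ[𝓝 s] fun t => (Δ - t)⁻¹ - (Δ + t)⁻¹ := by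
    filter_upwards [isOpen_Ioo.mem_nhds hs] with t ht using (hasDerivAt_logBarrier ht).deriv
  have h := (((hasDerivAt_id' s).const_sub Δ).fun_inv hminus).fun_sub
    (((hasDerivAt_id' s).const_add Δ).fun_inv hplus)
  rw [iteratedDeriv_succ, iteratedDeriv_one, hderiv.deriv_eq, h.deriv]
  ring

lemma two_div_sq_le_iteratedDeriv_two_logBarrier (hs : s ∈ Ioo (-Δ) Δ) :
    2 / Δ ^ 2 ≤ iteratedDeriv 2 (logBarrier Δ) s := by
  have hplus : 0 < Δ + s := by linarith [hs.1]
  have hminus : 0 < Δ - s := by linarith [hs.2]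
  rw [iteratedDeriv_two_logBarrier hs, ← one_div, ← one_div,
    div_add_div _ _ (by positivity) (by positivity), div_le_div_iff₀ (by nlinarith) (by positivity)]
  nlinarith [mul_pos hplus hminus, sq_nonneg s, sq_nonneg (s * s), sq_nonneg (Δ * s)]

end LogBarrier

section Box

variable {ι : Type*} [Fintype ι]

lemma isOpen_setOf_forall_lt_and_lt (a b : ι → ℝ) :
    IsOpen {x : EuclideanSpace ℝ ι | ∀ j, a j < x j ∧ x j < b j} := by
  simp only [ofPred_forall, ofPred_and]
  exact isOpen_iInter_of_finite fun j =>
    (isOpen_lt continuous_const (EuclideanSpace.proj j).continuous).inter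
      (isOpen_lt (EuclideanSpace.proj j).continuous continuous_const)

noncomputable def boxLogBarrier (Δ : ℝ) (x : EuclideanSpace ℝ ι) : ℝ :=
  ∑ j, logBarrier Δ (x j)

variable {Δ : ℝ} {x : EuclideanSpace ℝ ι}

lemma boxLogBarrier_eq_sum_comp_proj :
    boxLogBarrier Δ = ∑ j, logBarrier Δ ∘ EuclideanSpace.proj (𝕜 := ℝ) (ι := ι) j := by
  ext y; simp [boxLogBarrier]

lemma contDiffAt_logBarrier_comp_proj {n : WithTop ℕ∞} (hx : ∀ j, x j ∈ Ioo (-Δ) Δ) (j : ι) :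
    ContDiffAt ℝ n (logBarrier Δ ∘ EuclideanSpace.proj j) x :=
  (contDiffAt_logBarrier (hx j)).comp x
    (EuclideanSpace.proj j : EuclideanSpace ℝ ι →L[ℝ] ℝ).contDiff.contDiffAt

lemma contDiffAt_boxLogBarrier {n : WithTop ℕ∞} (hx : ∀ j, x j ∈ Ioo (-Δ) Δ) :
    ContDiffAt ℝ n (boxLogBarrier Δ) x :=
  ContDiffAt.sum fun j _ => contDiffAt_logBarrier_comp_proj hx j

lemma iteratedFDeriv_two_boxLogBarrier_apply (hx : ∀ j, x j ∈ Ioo (-Δ) Δ)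
    (v : EuclideanSpace ℝ ι) :
    iteratedFDeriv ℝ 2 (boxLogBarrier Δ) x ![v, v] =
      ∑ j, v j ^ 2 * iteratedDeriv 2 (logBarrier Δ) (x j) := by
  rw [boxLogBarrier_eq_sum_comp_proj,
    iteratedFDeriv_sum_apply fun j _ => contDiffAt_logBarrier_comp_proj hx j,
    sum_apply]
  exact Finset.sum_congr rfl fun j _ =>
    iteratedFDeriv_two_comp_clm_apply (EuclideanSpace.proj j) (contDiffAt_logBarrier (hx j)) v

lemma two_div_sq_mul_norm_sq_le_iteratedFDeriv_two_boxLogBarrier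
    (hx : ∀ j, x j ∈ Ioo (-Δ) Δ) (v : EuclideanSpace ℝ ι) :
    2 / Δ ^ 2 * ‖v‖ ^ 2 ≤ iteratedFDeriv ℝ 2 (boxLogBarrier Δ) x ![v, v] := by
  rw [iteratedFDeriv_two_boxLogBarrier_apply hx, EuclideanSpace.norm_sq_eq, Finset.mul_sum]
  refine Finset.sum_le_sum fun j _ => ?_
  rw [Real.norm_eq_abs, sq_abs, mul_comm]
  exact mul_le_mul_of_nonneg_left (two_div_sq_le_iteratedDeriv_two_logBarrier (hx j)) (sq_nonneg _)

end Box

theorem stmt_4_general (n : ℕ) (xL xR : EuclideanSpace ℝ (Fin n)) (Δ : ℝ)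
    (B S Ω : Set (EuclideanSpace ℝ (Fin n)))
    (hB : B = {x | ∀ j, xL j < x j ∧ x j < xR j})
    (hS : S = {x | ∀ j, -Δ < x j ∧ x j < Δ})
    (hΩ : Ω = B ∩ S)
    (ΓΔ : EuclideanSpace ℝ (Fin n) → ℝ)
    (hΓΔ : ∀ x, ΓΔ x = -∑ j, (Real.log (Δ + x j) + Real.log (Δ - x j)))
    (f : EuclideanSpace ℝ (Fin n) → ℝ)
    (U : Set (EuclideanSpace ℝ (Fin n))) (hU : IsOpen U) (hΩU : Ω ⊆ U)
    (hf : ContDiffOn ℝ 2 f U) (hconv : ConvexOn ℝ Ω f) :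
    ∀ x ∈ Ω, ∀ v : EuclideanSpace ℝ (Fin n),
      (2 / Δ ^ 2) * ‖v‖ ^ 2 ≤ iteratedFDeriv ℝ 2 (fun y => f y + ΓΔ y) x ![v, v] := by
  intro x hx v
  have hΩopen : IsOpen Ω := by
    rw [hΩ, hB, hS]
    exact (isOpen_setOf_forall_lt_and_lt _ _).inter (isOpen_setOf_forall_lt_and_lt _ _)
  have hxS : ∀ j, x j ∈ Ioo (-Δ) Δ := by
    rw [hΩ, hS] at hx
    exact hx.2
  have hΓ : ΓΔ = boxLogBarrier Δ := funext fun y => by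
    rw [hΓΔ, boxLogBarrier, ← Finset.sum_neg_distrib]
    rfl
  rw [hΓ, fun_iteratedFDeriv_add_apply (hf.contDiffAt (hU.mem_nhds (hΩU hx)))
    (contDiffAt_boxLogBarrier hxS), add_apply]
  linarith [hconv.iteratedFDeriv_two_nonneg_s4 hΩopen (hf.mono hΩU) hx v,
    two_div_sq_mul_norm_sq_le_iteratedFDeriv_two_boxLogBarrier hxS v]

/-- With `Γ_Δ(x) = -Σⱼ (log(Δ+xⱼ) + log(Δ-xⱼ))` on `Ω = B ∩ S`, if `f` is
twice continuously differentiable on an open set containing `Ω` and convex on `Ω`, then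
`g := f + Γ_Δ` satisfies `D²g(x)[v,v] ≥ (2/Δ²)·‖v‖₂²` for all `x ∈ Ω` and `v ∈ ℝⁿ`. -/
theorem stmt_4 (n : ℕ) (xL xR : EuclideanSpace ℝ (Fin n)) (Δ : ℝ) (hΔ : 0 < Δ)
    (B S Ω : Set (EuclideanSpace ℝ (Fin n)))
    (hB : B = {x | ∀ j, xL j < x j ∧ x j < xR j})
    (hS : S = {x | ∀ j, -Δ < x j ∧ x j < Δ})
    (hΩ : Ω = B ∩ S) (hne : Ω.Nonempty)
    (ΓΔ : EuclideanSpace ℝ (Fin n) → ℝ)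
    (hΓΔ : ∀ x, ΓΔ x = -∑ j, (Real.log (Δ + x j) + Real.log (Δ - x j)))
    (f : EuclideanSpace ℝ (Fin n) → ℝ)
    (U : Set (EuclideanSpace ℝ (Fin n))) (hU : IsOpen U) (hΩU : Ω ⊆ U)
    (hf : ContDiffOn ℝ 2 f U) (hconv : ConvexOn ℝ Ω f) :
    ∀ x ∈ Ω, ∀ v : EuclideanSpace ℝ (Fin n),
      (2 / Δ ^ 2) * ‖v‖ ^ 2 ≤ iteratedFDeriv ℝ 2 (fun y => f y + ΓΔ y) x ![v, v] :=
  stmt_4_general n xL xR Δ B S Ω hB hS hΩ ΓΔ hΓΔ f U hU hΩU hf hconv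
end

section
/- For every x in the closed interval Î := [ℓ + (u-ℓ)/4, u - (u-ℓ)/4], the second derivative of Γ satisfies 8/(u-ℓ)² ≤ Γ''(x) ≤ 64/(u-ℓ)², where Γ''(x) = 1/(x-x_L)² + 1/(x_R-x)² + 1/(Δ+x)² + 1/(Δ-x)². -/
/-!
`Γ` is the logarithmic barrier of the two intervals `(x_L, x_R)` and `(-Δ, Δ)`, so `Γ''(x)` is
the sum of the inverse squared distances from `x` to the four endpoints. The nearest lower
endpoint is at distance `x - ℓ` and the nearest upper one at distance `u - x`, so
`Γ''(x) ≥ 1/(x-ℓ)² + 1/(u-x)² ≥ 8/(u-ℓ)²` by convexity of `r ↦ 1/r²`. On `Î` every endpoint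
is at distance at least `(u-ℓ)/4`, so each of the four terms is at most `16/(u-ℓ)²`.
-/

open Real Topology

theorem deriv_deriv_eq_of_eventually_hasDerivAt {𝕜 F : Type*} [NontriviallyNormedField 𝕜]
    [NormedAddCommGroup F] [NormedSpace 𝕜 F] {f f' : 𝕜 → F} {x : 𝕜} {f'' : F}
    (hf : ∀ᶠ y in 𝓝 x, HasDerivAt f (f' y) y) (hf' : HasDerivAt f' f'' x) :
    deriv (deriv f) x = f'' := by
  rw [Filter.EventuallyEq.deriv_eq (hf.mono fun _ hy => hy.deriv), hf'.deriv]

section LogBarrier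

variable {a b y : ℝ}

theorem hasDerivAt_neg_log_sub_const (h : a < y) :
    HasDerivAt (fun y => -log (y - a)) (-(y - a)⁻¹) y := by
  simpa using (((hasDerivAt_id y).sub_const a).log (sub_pos.2 h).ne').fun_neg

theorem hasDerivAt_neg_log_const_sub (h : y < b) :
    HasDerivAt (fun y => -log (b - y)) (b - y)⁻¹ y := by
  simpa [neg_div] using (((hasDerivAt_id y).const_sub b).log (sub_pos.2 h).ne').fun_neg

theorem hasDerivAt_neg_inv_sub_const (h : y ≠ a) :
    HasDerivAt (fun y => -(y - a)⁻¹) (1 / (y - a) ^ 2) y := by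
  simpa [neg_div] using (((hasDerivAt_id y).sub_const a).fun_inv (sub_ne_zero.2 h)).fun_neg

theorem hasDerivAt_inv_const_sub (h : y ≠ b) :
    HasDerivAt (fun y => (b - y)⁻¹) (1 / (b - y) ^ 2) y := by
  simpa using ((hasDerivAt_id y).const_sub b).fun_inv (sub_ne_zero.2 h.symm)

theorem deriv_deriv_logBarrier {a₁ b₁ a₂ b₂ x : ℝ} (ha₁ : a₁ < x) (hb₁ : x < b₁)
    (ha₂ : a₂ < x) (hb₂ : x < b₂) :
    deriv (deriv fun y => -log (y - a₁) - log (b₁ - y) - log (y - a₂) - log (b₂ - y)) x =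
      1 / (x - a₁) ^ 2 + 1 / (b₁ - x) ^ 2 + 1 / (x - a₂) ^ 2 + 1 / (b₂ - x) ^ 2 := by
  have hnear : ∀ᶠ y in 𝓝 x, a₁ < y ∧ y < b₁ ∧ a₂ < y ∧ y < b₂ :=
    (eventually_gt_nhds ha₁).and <| (eventually_lt_nhds hb₁).and <|
      (eventually_gt_nhds ha₂).and (eventually_lt_nhds hb₂)
  refine deriv_deriv_eq_of_eventually_hasDerivAt
    (f' := fun y => -(y - a₁)⁻¹ + (b₁ - y)⁻¹ + -(y - a₂)⁻¹ + (b₂ - y)⁻¹)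
    (hnear.mono fun y ⟨h₁, h₂, h₃, h₄⟩ => ?_) ?_
  · simpa only [← sub_eq_add_neg] using
      (((hasDerivAt_neg_log_sub_const h₁).fun_add (hasDerivAt_neg_log_const_sub h₂)).fun_add
        (hasDerivAt_neg_log_sub_const h₃)).fun_add (hasDerivAt_neg_log_const_sub h₄)
  · exact (((hasDerivAt_neg_inv_sub_const ha₁.ne').fun_add
      (hasDerivAt_inv_const_sub hb₁.ne)).fun_add (hasDerivAt_neg_inv_sub_const ha₂.ne')).fun_add
      (hasDerivAt_inv_const_sub hb₂.ne)

end LogBarrier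

theorem one_div_sq_min_le_add (p q : ℝ) : 1 / min p q ^ 2 ≤ 1 / p ^ 2 + 1 / q ^ 2 := by
  have : 0 ≤ 1 / p ^ 2 := by positivity
  have : 0 ≤ 1 / q ^ 2 := by positivity
  rcases min_cases p q with ⟨h, _⟩ | ⟨h, _⟩ <;> rw [h] <;> linarith

theorem eight_div_add_sq_le {s t : ℝ} (hs : 0 < s) (ht : 0 < t) :
    8 / (s + t) ^ 2 ≤ 1 / s ^ 2 + 1 / t ^ 2 := by
  rw [div_add_div _ _ (by positivity) (by positivity), div_le_div_iff₀ (by positivity)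
    (by positivity)]
  nlinarith [mul_nonneg (sq_nonneg (s - t)) (by positivity : 0 ≤ s ^ 2 + 4 * s * t + t ^ 2)]

theorem one_div_sq_le_sixteen_div_sq {w d : ℝ} (hw : 0 < w) (h : w / 4 ≤ d) :
    1 / d ^ 2 ≤ 16 / w ^ 2 :=
  calc 1 / d ^ 2 ≤ 1 / (w / 4) ^ 2 := by gcongr
    _ = 16 / w ^ 2 := by field_simp; norm_num

theorem stmt_6_general (xL xR Δ : ℝ) (ℓ u : ℝ)
    (hℓ : ℓ = max (-Δ) xL) (hu : u = min Δ xR) (hℓu : ℓ < u)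
    (Γ : ℝ → ℝ)
    (hΓ : ∀ x, Γ x = -Real.log (x - xL) - Real.log (xR - x)
      - Real.log (Δ + x) - Real.log (Δ - x)) :
    ∀ x ∈ Set.Icc (ℓ + (u - ℓ) / 4) (u - (u - ℓ) / 4),
      deriv (deriv Γ) x = 1 / (x - xL) ^ 2 + 1 / (xR - x) ^ 2
        + 1 / (Δ + x) ^ 2 + 1 / (Δ - x) ^ 2 ∧
      8 / (u - ℓ) ^ 2 ≤ deriv (deriv Γ) x ∧
      deriv (deriv Γ) x ≤ 64 / (u - ℓ) ^ 2 := by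
  rintro x ⟨hℓx, hxu⟩
  have hw : 0 < u - ℓ := sub_pos.2 hℓu
  have hs : x - ℓ = min (x - xL) (Δ + x) := by
    rw [hℓ, ← min_sub_sub_left, min_comm, sub_neg_eq_add, add_comm]
  have ht : u - x = min (xR - x) (Δ - x) := by rw [hu, ← min_sub_sub_right, min_comm]
  obtain ⟨hxL, hΔx⟩ : (u - ℓ) / 4 ≤ x - xL ∧ (u - ℓ) / 4 ≤ Δ + x :=
    le_min_iff.1 (by rw [← hs]; linarith)
  obtain ⟨hxR, hxΔ⟩ : (u - ℓ) / 4 ≤ xR - x ∧ (u - ℓ) / 4 ≤ Δ - x :=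
    le_min_iff.1 (by rw [← ht]; linarith)
  have hΓ'' : deriv (deriv Γ) x = 1 / (x - xL) ^ 2 + 1 / (xR - x) ^ 2
      + 1 / (Δ + x) ^ 2 + 1 / (Δ - x) ^ 2 := by
    have hΓeq : Γ = fun y => -log (y - xL) - log (xR - y) - log (y - -Δ) - log (Δ - y) := by
      ext y; rw [hΓ, sub_neg_eq_add, add_comm y]
    simpa only [hΓeq, sub_neg_eq_add, add_comm x] using
      deriv_deriv_logBarrier (a₁ := xL) (b₁ := xR) (a₂ := -Δ) (b₂ := Δ) (x := x)
        (by linarith) (by linarith) (by linarith) (by linarith)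
  refine ⟨hΓ'', ?_, ?_⟩ <;> rw [hΓ'']
  · calc 8 / (u - ℓ) ^ 2 = 8 / ((x - ℓ) + (u - x)) ^ 2 := by ring_nf
      _ ≤ 1 / (x - ℓ) ^ 2 + 1 / (u - x) ^ 2 := eight_div_add_sq_le (by linarith) (by linarith)
      _ ≤ _ := by
        rw [hs, ht]
        linarith [one_div_sq_min_le_add (x - xL) (Δ + x), one_div_sq_min_le_add (xR - x) (Δ - x)]
  · calc _ ≤ 16 / (u - ℓ) ^ 2 + 16 / (u - ℓ) ^ 2 + 16 / (u - ℓ) ^ 2 + 16 / (u - ℓ) ^ 2 := by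
          gcongr ?_ + ?_ + ?_ + ?_ <;> exact one_div_sq_le_sixteen_div_sq hw ‹_›
      _ = 64 / (u - ℓ) ^ 2 := by ring

/-- For `Γ(x) = -log(x-x_L) - log(x_R-x) - log(Δ+x) - log(Δ-x)` with
`ℓ = max(-Δ, x_L)`, `u = min(Δ, x_R)`, `ℓ < u`, on the closed interval
`Î = [ℓ+(u-ℓ)/4, u-(u-ℓ)/4]` the second derivative satisfies
`8/(u-ℓ)² ≤ Γ''(x) ≤ 64/(u-ℓ)²`, where
`Γ''(x) = 1/(x-x_L)² + 1/(x_R-x)² + 1/(Δ+x)² + 1/(Δ-x)²`. -/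
theorem stmt_6 (xL xR Δ : ℝ) (hΔ : 0 < Δ) (ℓ u : ℝ)
    (hℓ : ℓ = max (-Δ) xL) (hu : u = min Δ xR) (hℓu : ℓ < u)
    (Γ : ℝ → ℝ)
    (hΓ : ∀ x, Γ x = -Real.log (x - xL) - Real.log (xR - x)
      - Real.log (Δ + x) - Real.log (Δ - x)) :
    ∀ x ∈ Set.Icc (ℓ + (u - ℓ) / 4) (u - (u - ℓ) / 4),
      deriv (deriv Γ) x = 1 / (x - xL) ^ 2 + 1 / (xR - x) ^ 2
        + 1 / (Δ + x) ^ 2 + 1 / (Δ - x) ^ 2 ∧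
      8 / (u - ℓ) ^ 2 ≤ deriv (deriv Γ) x ∧
      deriv (deriv Γ) x ≤ 64 / (u - ℓ) ^ 2 :=
  stmt_6_general xL xR Δ ℓ u hℓ hu hℓu Γ hΓ
end

section
/- Let x₀ := (ℓ + u)/2 be the midpoint of the interval (ℓ, u), and let x* be the unique minimizer of Γ over (ℓ, u). Then Γ(x₀) - Γ(x*) ≤ log(32/27); in particular 375·(Γ(x₀) - Γ(x*)) < 64. -/
/-!
Writing `p = min (-Δ) xL` and `q = max Δ xR`, the barrier is `Γ = -log P` with
`P x = (x - ℓ)(x - p)(u - x)(q - x)`. With `r = (u - ℓ)/2` and `y = x - x₀` this is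
`(r² - y²)(t + y)(s - y)` where `t = x₀ - p ≥ r` and `s = q - x₀ ≥ r`. For `0 ≤ y` the outer
factors grow by at most `(t + y)/t ≤ (r + y)/r` and `(s - y)/s ≤ 1`, and
`(r - y)(r + y)² ≤ (32/27) r³`, so `P x ≤ (32/27) P x₀` on the whole interval; the case `y ≤ 0`
is the mirror image. Taking logarithms bounds `Γ x₀ - Γ x` for every `x ∈ (ℓ, u)`, in particular
for the minimizer.
-/

open Real Set

theorem Real.log_32_div_27_lt : log (32 / 27) < 64 / 375 := by
  rw [log_lt_iff_lt_exp (by norm_num)]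
  calc (32 : ℝ) / 27 < 1 + 64 / 375 + (64 / 375) ^ 2 / 2 := by norm_num
    _ ≤ exp (64 / 375) := quadratic_le_exp_of_nonneg (by norm_num)

/-- Equality at `y = r / 3`: `32 r³ - 27 (r - y)(r + y)² = (3y - r)² (3y + 5r)`. -/
theorem sub_mul_add_sq_le {r y : ℝ} (h : 0 ≤ 3 * y + 5 * r) :
    (r - y) * (r + y) ^ 2 ≤ 32 / 27 * r ^ 3 := by
  nlinarith [mul_nonneg (sq_nonneg (3 * y - r)) h]

theorem quartic_le_of_nonneg {r y t s : ℝ} (hy : 0 ≤ y) (hyr : y ≤ r) (hrt : r ≤ t)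
    (hrs : r ≤ s) :
    (r - y) * (r + y) * ((t + y) * (s - y)) ≤ 32 / 27 * (r ^ 2 * (t * s)) := by
  obtain rfl | hr := (hy.trans hyr).eq_or_lt
  · obtain rfl : y = 0 := le_antisymm hyr hy
    simp
  have hrr : 0 ≤ (r - y) * (r + y) := mul_nonneg (by linarith) (by linarith)
  have hts : 0 ≤ t * s := mul_nonneg (by linarith) (by linarith)
  have hshift : r * (t + y) ≤ (r + y) * t := by nlinarith
  refine le_of_mul_le_mul_left ?_ hr
  calc r * ((r - y) * (r + y) * ((t + y) * (s - y)))
      = (r - y) * (r + y) * ((s - y) * (r * (t + y))) := by ring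
    _ ≤ (r - y) * (r + y) * (s * ((r + y) * t)) :=
        mul_le_mul_of_nonneg_left
          (mul_le_mul (by linarith) hshift (by nlinarith) (by linarith)) hrr
    _ = (r - y) * (r + y) ^ 2 * (t * s) := by ring
    _ ≤ 32 / 27 * r ^ 3 * (t * s) :=
        mul_le_mul_of_nonneg_right (sub_mul_add_sq_le (by linarith)) hts
    _ = r * (32 / 27 * (r ^ 2 * (t * s))) := by ring

theorem quartic_le_of_abs_le {r y t s : ℝ} (hy : |y| ≤ r) (hrt : r ≤ t) (hrs : r ≤ s) :
    (r - y) * (r + y) * ((t + y) * (s - y)) ≤ 32 / 27 * (r ^ 2 * (t * s)) := by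
  rcases le_total 0 y with h | h
  · exact quartic_le_of_nonneg h ((le_abs_self y).trans hy) hrt hrs
  · have := quartic_le_of_nonneg (neg_nonneg.2 h) ((neg_le_abs y).trans hy) hrs hrt
    linarith

theorem quartic_le_midpoint {p ℓ u q x : ℝ} (hp : p ≤ ℓ) (hq : u ≤ q) (hx : x ∈ Icc ℓ u) :
    (x - ℓ) * (x - p) * ((u - x) * (q - x)) ≤
      32 / 27 * (((ℓ + u) / 2 - ℓ) * ((ℓ + u) / 2 - p) *
        ((u - (ℓ + u) / 2) * (q - (ℓ + u) / 2))) := by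
  obtain ⟨hℓx, hxu⟩ := hx
  have hy : |x - (ℓ + u) / 2| ≤ (u - ℓ) / 2 := abs_le.2 ⟨by linarith, by linarith⟩
  have key := quartic_le_of_abs_le hy (t := (ℓ + u) / 2 - p) (s := q - (ℓ + u) / 2)
    (by linarith) (by linarith)
  convert key using 1 <;> ring

theorem quartic_pos {p ℓ u q x : ℝ} (hp : p ≤ ℓ) (hq : u ≤ q) (hx : x ∈ Ioo ℓ u) :
    0 < (x - ℓ) * (x - p) * ((u - x) * (q - x)) := by
  obtain ⟨hℓx, hxu⟩ := hx
  exact mul_pos (mul_pos (by linarith) (by linarith)) (mul_pos (by linarith) (by linarith))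

theorem sub_max_mul_sub_min (z a b : ℝ) :
    (z - max a b) * (z - min a b) = (z - a) * (z - b) := by
  rcases le_total a b with h | h <;> simp [h, mul_comm]

theorem min_sub_mul_max_sub (z a b : ℝ) :
    (min a b - z) * (max a b - z) = (a - z) * (b - z) := by
  rcases le_total a b with h | h <;> simp [h, mul_comm]

theorem neg_log_barrier_eq {xL xR Δ x : ℝ} (hx : x ∈ Ioo (max (-Δ) xL) (min Δ xR)) :
    -log (x - xL) - log (xR - x) - log (Δ + x) - log (Δ - x) =
      -log ((x - max (-Δ) xL) * (x - min (-Δ) xL) *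
        ((min Δ xR - x) * (max Δ xR - x))) := by
  obtain ⟨hℓx, hxu⟩ := hx
  have h₁ : 0 < x - xL := by linarith [le_max_right (-Δ) xL]
  have h₂ : 0 < xR - x := by linarith [min_le_right Δ xR]
  have h₃ : 0 < Δ + x := by linarith [le_max_left (-Δ) xL]
  have h₄ : 0 < Δ - x := by linarith [min_le_left Δ xR]
  rw [sub_max_mul_sub_min, min_sub_mul_max_sub, sub_neg_eq_add, add_comm x Δ,
    log_mul (mul_pos h₃ h₁).ne' (mul_pos h₄ h₂).ne', log_mul h₃.ne' h₁.ne',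
    log_mul h₄.ne' h₂.ne']
  ring

theorem stmt_10_general (xL xR Δ : ℝ) (ℓ u : ℝ)
    (hℓ : ℓ = max (-Δ) xL) (hu : u = min Δ xR) (hℓu : ℓ < u)
    (Γ : ℝ → ℝ)
    (hΓ : ∀ x, Γ x = -Real.log (x - xL) - Real.log (xR - x)
      - Real.log (Δ + x) - Real.log (Δ - x))
    (xstar : ℝ) (hmem : xstar ∈ Set.Ioo ℓ u) :
    Γ ((ℓ + u) / 2) - Γ xstar ≤ Real.log (32 / 27) ∧
    375 * (Γ ((ℓ + u) / 2) - Γ xstar) < 64 := by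
  subst hℓ hu
  have hmid : (max (-Δ) xL + min Δ xR) / 2 ∈ Ioo (max (-Δ) xL) (min Δ xR) :=
    ⟨by linarith, by linarith⟩
  have hgap : Γ ((max (-Δ) xL + min Δ xR) / 2) - Γ xstar ≤ log (32 / 27) := by
    have hP := log_le_log (quartic_pos min_le_max min_le_max hmem)
      (quartic_le_midpoint min_le_max min_le_max (Ioo_subset_Icc_self hmem))
    rw [log_mul (by norm_num) (quartic_pos min_le_max min_le_max hmid).ne'] at hP
    rw [hΓ, hΓ, neg_log_barrier_eq hmid, neg_log_barrier_eq hmem]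
    linarith
  exact ⟨hgap, by linarith [Real.log_32_div_27_lt]⟩

/-- With `x₀ = (ℓ+u)/2` the midpoint and `x*` the unique minimizer of `Γ`
over `(ℓ, u)`, the optimality gap satisfies `Γ(x₀) - Γ(x*) ≤ log(32/27)`; in particular
`375·(Γ(x₀) - Γ(x*)) < 64`. -/
theorem stmt_10 (xL xR Δ : ℝ) (hΔ : 0 < Δ) (ℓ u : ℝ)
    (hℓ : ℓ = max (-Δ) xL) (hu : u = min Δ xR) (hℓu : ℓ < u)
    (Γ : ℝ → ℝ)
    (hΓ : ∀ x, Γ x = -Real.log (x - xL) - Real.log (xR - x)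
      - Real.log (Δ + x) - Real.log (Δ - x))
    (xstar : ℝ) (hmem : xstar ∈ Set.Ioo ℓ u) (hmin : IsMinOn Γ (Set.Ioo ℓ u) xstar) :
    Γ ((ℓ + u) / 2) - Γ xstar ≤ Real.log (32 / 27) ∧
    375 * (Γ ((ℓ + u) / 2) - Γ xstar) < 64 :=
  stmt_10_general xL xR Δ ℓ u hℓ hu hℓu Γ hΓ xstar hmem
end

section
/- Let x* be the unique minimizer of Γ over (ℓ, u), let 0 < ε ≤ 1/36, and let x ∈ (ℓ, u) satisfy Γ(x) - Γ(x*) ≤ ε. Then both x and x* lie in the interval Î := [ℓ + (u-ℓ)/4, u - (u-ℓ)/4], and the derivative of Γ at x satisfies |Γ'(x)| ≤ (32/(u-ℓ))·√ε. -/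
/-!
`Γ` is the sum of the logarithmic barriers of `(xL, xR)` and `(-Δ, Δ)`. Its second derivative
dominates `(y - ℓ)⁻² + (u - y)⁻² ≥ 8 / (u - ℓ)²`, so `Γ` is strongly convex and an `ε`-minimizer
satisfies `|x - x*| ≤ (u - ℓ) √ε / 2 ≤ (u - ℓ) / 12`. At `x*` the reciprocal distances to the left
endpoints balance those to the right endpoints, which puts `x*` in the middle third of `(ℓ, u)`.
Hence `x, x* ∈ Î`, where `Γ'' ≤ 64 / (u - ℓ)²`, and the mean value theorem bounds
`|Γ'(x)| = |Γ'(x) - Γ'(x*)|`.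
-/

open Real Set

theorem mul_sq_le_sub_of_le_deriv2 {D : Set ℝ} (hD : Convex ℝ D) (hDo : IsOpen D)
    {f f' f'' : ℝ → ℝ} {m a x : ℝ}
    (hf : ∀ y ∈ D, HasDerivAt f (f' y) y) (hf' : ∀ y ∈ D, HasDerivAt f' (f'' y) y)
    (hm : ∀ y ∈ D, m ≤ f'' y) (ha : a ∈ D) (hfa : f' a = 0) (hx : x ∈ D) :
    m / 2 * (x - a) ^ 2 ≤ f x - f a := by
  set F : ℝ → ℝ := fun y => f y - m / 2 * (y - a) ^ 2
  have hF : ∀ y ∈ D, HasDerivAt F (f' y - m * (y - a)) y := fun y hy => by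
    refine ((hf y hy).fun_sub
      ((((hasDerivAt_id y).sub_const a).fun_pow 2).const_mul (m / 2))).congr_deriv ?_
    simp only [id_eq, Nat.cast_ofNat]
    ring
  have hF' : ∀ y ∈ D, HasDerivAt (fun y => f' y - m * (y - a)) (f'' y - m) y := fun y hy => by
    simpa using (hf' y hy).fun_sub (((hasDerivAt_id y).sub_const a).const_mul m)
  have hconv : ConvexOn ℝ D F := by
    refine convexOn_of_hasDerivWithinAt2_nonneg (f' := fun y => f' y - m * (y - a))
      (f'' := fun y => f'' y - m) hD
      (fun y hy => (hF y hy).continuousAt.continuousWithinAt) ?_ ?_ ?_ <;> rw [hDo.interior_eq]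
    · exact fun y hy => (hF y hy).hasDerivWithinAt
    · exact fun y hy => (hF' y hy).hasDerivWithinAt
    · exact fun y hy => sub_nonneg.2 (hm y hy)
  have hmin : IsMinOn F D a := by
    refine hconv.isMinOn_of_rightDeriv_eq_zero (by rwa [hDo.interior_eq]) ?_
    rw [(hF a ha).hasDerivWithinAt.derivWithin (uniqueDiffWithinAt_Ioi a), hfa]
    ring
  have hFx : F a ≤ F x := hmin hx
  simp only [F, sub_self] at hFx
  linarith

theorem inv_min_pow_le_inv_pow_add_inv_pow {p q : ℝ} (hp : 0 < p) (hq : 0 < q) (n : ℕ) :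
    (min p q ^ n)⁻¹ ≤ (p ^ n)⁻¹ + (q ^ n)⁻¹ := by
  rcases min_cases p q with ⟨h, -⟩ | ⟨h, -⟩ <;> rw [h]
  · exact le_add_of_nonneg_right (by positivity)
  · exact le_add_of_nonneg_left (by positivity)

theorem inv_add_inv_le_two_mul_inv_min {p q : ℝ} (hp : 0 < p) (hq : 0 < q) :
    p⁻¹ + q⁻¹ ≤ 2 * (min p q)⁻¹ := by
  have hpq := lt_min hp hq
  linarith [inv_anti₀ hpq (min_le_left p q), inv_anti₀ hpq (min_le_right p q)]

theorem min_le_two_mul_min_of_inv_add_inv_eq {p₁ p₂ q₁ q₂ : ℝ} (hp₁ : 0 < p₁) (hp₂ : 0 < p₂)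
    (hq₁ : 0 < q₁) (hq₂ : 0 < q₂) (h : p₁⁻¹ + p₂⁻¹ = q₁⁻¹ + q₂⁻¹) :
    min q₁ q₂ ≤ 2 * min p₁ p₂ := by
  have hp := lt_min hp₁ hp₂
  have hq := lt_min hq₁ hq₂
  have hinv : (min p₁ p₂)⁻¹ ≤ (min q₁ q₂ / 2)⁻¹ := by
    calc (min p₁ p₂)⁻¹ ≤ p₁⁻¹ + p₂⁻¹ := by simpa using inv_min_pow_le_inv_pow_add_inv_pow hp₁ hp₂ 1
      _ = q₁⁻¹ + q₂⁻¹ := h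
      _ ≤ 2 * (min q₁ q₂)⁻¹ := inv_add_inv_le_two_mul_inv_min hq₁ hq₂
      _ = (min q₁ q₂ / 2)⁻¹ := by rw [inv_div, div_eq_mul_inv]
  linarith [(inv_le_inv₀ hp (half_pos hq)).1 hinv]

theorem eight_div_sq_le_inv_sq_add_inv_sq {p q : ℝ} (hp : 0 < p) (hq : 0 < q) :
    8 / (p + q) ^ 2 ≤ (p ^ 2)⁻¹ + (q ^ 2)⁻¹ := by
  rw [div_le_iff₀ (by positivity), inv_add_inv (by positivity) (by positivity),
    div_mul_eq_mul_div, le_div_iff₀ (by positivity)]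
  nlinarith [sq_nonneg (p ^ 2 - q ^ 2), mul_nonneg (mul_nonneg hp.le hq.le) (sq_nonneg (p - q))]

noncomputable def intervalBarrier (a b y : ℝ) : ℝ := -log (y - a) - log (b - y)

noncomputable def intervalBarrierDeriv (a b y : ℝ) : ℝ := (b - y)⁻¹ - (y - a)⁻¹

noncomputable def intervalBarrierDeriv2 (a b y : ℝ) : ℝ := ((y - a) ^ 2)⁻¹ + ((b - y) ^ 2)⁻¹

section IntervalBarrier

variable {a b y : ℝ}

theorem hasDerivAt_intervalBarrier (hy : y ∈ Ioo a b) :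
    HasDerivAt (intervalBarrier a b) (intervalBarrierDeriv a b y) y := by
  have hya : y - a ≠ 0 := (sub_pos.2 hy.1).ne'
  have hby : b - y ≠ 0 := (sub_pos.2 hy.2).ne'
  refine ((((hasDerivAt_id y).sub_const a).log hya).fun_neg.fun_sub
    (((hasDerivAt_id y).const_sub b).log hby)).congr_deriv ?_
  simp only [intervalBarrierDeriv, id_eq]
  ring

theorem hasDerivAt_intervalBarrierDeriv (hy : y ∈ Ioo a b) :
    HasDerivAt (intervalBarrierDeriv a b) (intervalBarrierDeriv2 a b y) y := by
  have hya : y - a ≠ 0 := (sub_pos.2 hy.1).ne'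
  have hby : b - y ≠ 0 := (sub_pos.2 hy.2).ne'
  refine ((((hasDerivAt_id y).const_sub b).fun_inv hby).fun_sub
    (((hasDerivAt_id y).sub_const a).fun_inv hya)).congr_deriv ?_
  simp only [intervalBarrierDeriv2, id_eq]
  ring

end IntervalBarrier

section TwoIntervalBarriers

variable {a₁ b₁ a₂ b₂ ℓ u y : ℝ}

theorem mem_Ioo_of_mem_Ioo_max_min (hℓ : ℓ = max a₁ a₂) (hu : u = min b₁ b₂)
    (hy : y ∈ Ioo ℓ u) : y ∈ Ioo a₁ b₁ ∧ y ∈ Ioo a₂ b₂ := by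
  rwa [hℓ, hu, ← Ioo_inter_Ioo] at hy

theorem hasDerivAt_intervalBarrier_add (hℓ : ℓ = max a₁ a₂) (hu : u = min b₁ b₂)
    (hy : y ∈ Ioo ℓ u) :
    HasDerivAt (intervalBarrier a₁ b₁ + intervalBarrier a₂ b₂)
      ((intervalBarrierDeriv a₁ b₁ + intervalBarrierDeriv a₂ b₂) y) y :=
  have hy' := mem_Ioo_of_mem_Ioo_max_min hℓ hu hy
  (hasDerivAt_intervalBarrier hy'.1).add (hasDerivAt_intervalBarrier hy'.2)

theorem hasDerivAt_intervalBarrierDeriv_add (hℓ : ℓ = max a₁ a₂) (hu : u = min b₁ b₂)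
    (hy : y ∈ Ioo ℓ u) :
    HasDerivAt (intervalBarrierDeriv a₁ b₁ + intervalBarrierDeriv a₂ b₂)
      ((intervalBarrierDeriv2 a₁ b₁ + intervalBarrierDeriv2 a₂ b₂) y) y :=
  have hy' := mem_Ioo_of_mem_Ioo_max_min hℓ hu hy
  (hasDerivAt_intervalBarrierDeriv hy'.1).add (hasDerivAt_intervalBarrierDeriv hy'.2)

theorem eight_div_sq_le_intervalBarrierDeriv2_add (hℓ : ℓ = max a₁ a₂) (hu : u = min b₁ b₂)
    (hy : y ∈ Ioo ℓ u) :
    8 / (u - ℓ) ^ 2 ≤ intervalBarrierDeriv2 a₁ b₁ y + intervalBarrierDeriv2 a₂ b₂ y := by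
  obtain ⟨⟨h₁, h₂⟩, h₃, h₄⟩ := mem_Ioo_of_mem_Ioo_max_min hℓ hu hy
  have hyℓ : y - ℓ = min (y - a₁) (y - a₂) := by rw [hℓ, sub_sup]
  have huy : u - y = min (b₁ - y) (b₂ - y) := by rw [hu, inf_sub]
  calc 8 / (u - ℓ) ^ 2 = 8 / ((y - ℓ) + (u - y)) ^ 2 := by ring_nf
    _ ≤ ((y - ℓ) ^ 2)⁻¹ + ((u - y) ^ 2)⁻¹ :=
      eight_div_sq_le_inv_sq_add_inv_sq (sub_pos.2 hy.1) (sub_pos.2 hy.2)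
    _ ≤ (((y - a₁) ^ 2)⁻¹ + ((y - a₂) ^ 2)⁻¹) + (((b₁ - y) ^ 2)⁻¹ + ((b₂ - y) ^ 2)⁻¹) := by
      rw [hyℓ, huy]
      gcongr <;> exact inv_min_pow_le_inv_pow_add_inv_pow (by linarith) (by linarith) 2
    _ = intervalBarrierDeriv2 a₁ b₁ y + intervalBarrierDeriv2 a₂ b₂ y := by
      simp only [intervalBarrierDeriv2]
      ring

theorem intervalBarrierDeriv2_add_le (hℓ : ℓ = max a₁ a₂) (hu : u = min b₁ b₂) {δ : ℝ}
    (hδ : 0 < δ) (hy : y ∈ Icc (ℓ + δ) (u - δ)) :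
    intervalBarrierDeriv2 a₁ b₁ y + intervalBarrierDeriv2 a₂ b₂ y ≤ 4 / δ ^ 2 := by
  have hℓ₁ : a₁ ≤ ℓ := hℓ ▸ le_max_left a₁ a₂
  have hℓ₂ : a₂ ≤ ℓ := hℓ ▸ le_max_right a₁ a₂
  have hu₁ : u ≤ b₁ := hu ▸ min_le_left b₁ b₂
  have hu₂ : u ≤ b₂ := hu ▸ min_le_right b₁ b₂
  have hbound : ∀ p, δ ≤ p → (p ^ 2)⁻¹ ≤ (δ ^ 2)⁻¹ := fun p hp =>
    inv_anti₀ (by positivity) (pow_le_pow_left₀ hδ.le hp 2)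
  have := hbound (y - a₁) (by linarith [hy.1])
  have := hbound (y - a₂) (by linarith [hy.1])
  have := hbound (b₁ - y) (by linarith [hy.2])
  have := hbound (b₂ - y) (by linarith [hy.2])
  simp only [intervalBarrierDeriv2]
  rw [div_eq_mul_inv]
  linarith

theorem abs_intervalBarrierDeriv_add_sub_le (hℓ : ℓ = max a₁ a₂) (hu : u = min b₁ b₂) {δ x : ℝ}
    (hδ : 0 < δ) (hx : x ∈ Icc (ℓ + δ) (u - δ)) (hy : y ∈ Icc (ℓ + δ) (u - δ)) :
    |(intervalBarrierDeriv a₁ b₁ + intervalBarrierDeriv a₂ b₂) x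
        - (intervalBarrierDeriv a₁ b₁ + intervalBarrierDeriv a₂ b₂) y|
      ≤ 4 / δ ^ 2 * |x - y| := by
  refine (convex_Icc _ _).norm_image_sub_le_of_norm_hasDerivWithin_le
    (fun z hz => (hasDerivAt_intervalBarrierDeriv_add hℓ hu
      ⟨by linarith [hz.1], by linarith [hz.2]⟩).hasDerivWithinAt) (fun z hz => ?_) hy hx
  have hnonneg : 0 ≤ intervalBarrierDeriv2 a₁ b₁ z + intervalBarrierDeriv2 a₂ b₂ z := by
    simp only [intervalBarrierDeriv2]
    positivity
  rw [Pi.add_apply, Real.norm_eq_abs, abs_of_nonneg hnonneg]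
  exact intervalBarrierDeriv2_add_le hℓ hu hδ hz

theorem mem_Icc_of_intervalBarrierDeriv_add_eq_zero (hℓ : ℓ = max a₁ a₂) (hu : u = min b₁ b₂)
    (hy : y ∈ Ioo ℓ u) (hcrit : intervalBarrierDeriv a₁ b₁ y + intervalBarrierDeriv a₂ b₂ y = 0) :
    y ∈ Icc (ℓ + (u - ℓ) / 3) (u - (u - ℓ) / 3) := by
  obtain ⟨⟨h₁, h₂⟩, h₃, h₄⟩ := mem_Ioo_of_mem_Ioo_max_min hℓ hu hy
  have hyℓ : y - ℓ = min (y - a₁) (y - a₂) := by rw [hℓ, sub_sup]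
  have huy : u - y = min (b₁ - y) (b₂ - y) := by rw [hu, inf_sub]
  have hbalance : (y - a₁)⁻¹ + (y - a₂)⁻¹ = (b₁ - y)⁻¹ + (b₂ - y)⁻¹ := by
    simp only [intervalBarrierDeriv] at hcrit
    linarith
  have hleft := min_le_two_mul_min_of_inv_add_inv_eq (sub_pos.2 h₁) (sub_pos.2 h₃)
    (sub_pos.2 h₂) (sub_pos.2 h₄) hbalance
  have hright := min_le_two_mul_min_of_inv_add_inv_eq (sub_pos.2 h₂) (sub_pos.2 h₄)
    (sub_pos.2 h₁) (sub_pos.2 h₃) hbalance.symm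
  rw [← hyℓ, ← huy] at hleft hright
  constructor <;> linarith

end TwoIntervalBarriers

theorem stmt_12_general (xL xR Δ : ℝ) (ℓ u : ℝ)
    (hℓ : ℓ = max (-Δ) xL) (hu : u = min Δ xR) (hℓu : ℓ < u)
    (Γ : ℝ → ℝ)
    (hΓ : ∀ x, Γ x = -Real.log (x - xL) - Real.log (xR - x)
      - Real.log (Δ + x) - Real.log (Δ - x))
    (xstar : ℝ) (hmem : xstar ∈ Set.Ioo ℓ u) (hmin : IsMinOn Γ (Set.Ioo ℓ u) xstar)
    (ε : ℝ) (hε1 : ε ≤ 1 / 36)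
    (x : ℝ) (hx : x ∈ Set.Ioo ℓ u) (hgap : Γ x - Γ xstar ≤ ε) :
    x ∈ Set.Icc (ℓ + (u - ℓ) / 4) (u - (u - ℓ) / 4) ∧
    xstar ∈ Set.Icc (ℓ + (u - ℓ) / 4) (u - (u - ℓ) / 4) ∧
    |deriv Γ x| ≤ (32 / (u - ℓ)) * Real.sqrt ε := by
  have hΓ_eq : Γ = intervalBarrier (-Δ) Δ + intervalBarrier xL xR := by
    funext y
    rw [hΓ, Pi.add_apply, intervalBarrier, intervalBarrier, sub_neg_eq_add, add_comm y Δ]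
    ring
  subst hΓ_eq
  set L := u - ℓ
  have hL : 0 < L := sub_pos.2 hℓu
  set Γ' := intervalBarrierDeriv (-Δ) Δ + intervalBarrierDeriv xL xR
  have hcrit : Γ' xstar = 0 :=
    (hmin.isLocalMin (isOpen_Ioo.mem_nhds hmem)).hasDerivAt_eq_zero
      (hasDerivAt_intervalBarrier_add hℓ hu hmem)
  have hxstar := mem_Icc_of_intervalBarrierDeriv_add_eq_zero hℓ hu hmem hcrit
  have hgrowth := mul_sq_le_sub_of_le_deriv2 (convex_Ioo ℓ u) isOpen_Ioo
    (fun y hy => hasDerivAt_intervalBarrier_add hℓ hu hy)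
    (fun y hy => hasDerivAt_intervalBarrierDeriv_add hℓ hu hy)
    (fun y hy => eight_div_sq_le_intervalBarrierDeriv2_add hℓ hu hy) hmem hcrit hx
  have hsq : (x - xstar) ^ 2 ≤ (L / 2) ^ 2 * ε := by
    calc (x - xstar) ^ 2 = L ^ 2 / 4 * (8 / L ^ 2 / 2 * (x - xstar) ^ 2) := by field_simp; ring
      _ ≤ L ^ 2 / 4 * ε := by gcongr; exact hgrowth.trans hgap
      _ = (L / 2) ^ 2 * ε := by ring
  have hdist : |x - xstar| ≤ L / 2 * √ε := (abs_le_sqrt hsq).trans_eq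
    (by rw [sqrt_mul (sq_nonneg _), sqrt_sq (half_pos hL).le])
  have hsqrt : √ε ≤ 1 / 6 := (sqrt_le_sqrt hε1).trans_eq
    (by rw [show (1 / 36 : ℝ) = (1 / 6) ^ 2 by norm_num, sqrt_sq (by norm_num)])
  obtain ⟨hlo, hhi⟩ := abs_le.1 (show |x - xstar| ≤ L / 12 by nlinarith)
  have hx' : x ∈ Icc (ℓ + L / 4) (u - L / 4) := ⟨by linarith [hxstar.1], by linarith [hxstar.2]⟩
  have hxstar' : xstar ∈ Icc (ℓ + L / 4) (u - L / 4) :=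
    ⟨by linarith [hxstar.1], by linarith [hxstar.2]⟩
  refine ⟨hx', hxstar', ?_⟩
  rw [(hasDerivAt_intervalBarrier_add hℓ hu hx).deriv]
  calc |Γ' x| = |Γ' x - Γ' xstar| := by rw [hcrit, sub_zero]
    _ ≤ 4 / (L / 4) ^ 2 * |x - xstar| :=
        abs_intervalBarrierDeriv_add_sub_le hℓ hu (by positivity) hx' hxstar'
    _ ≤ 4 / (L / 4) ^ 2 * (L / 2 * √ε) := by gcongr
    _ = 32 / L * √ε := by field_simp; ring

/-- With `x*` the unique minimizer of `Γ` over `(ℓ, u)`, `0 < ε ≤ 1/36`,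
and `x ∈ (ℓ, u)` with `Γ(x) - Γ(x*) ≤ ε`, both `x` and `x*` lie in
`Î = [ℓ+(u-ℓ)/4, u-(u-ℓ)/4]` and `|Γ'(x)| ≤ (32/(u-ℓ))·√ε`. -/
theorem stmt_12 (xL xR Δ : ℝ) (hΔ : 0 < Δ) (ℓ u : ℝ)
    (hℓ : ℓ = max (-Δ) xL) (hu : u = min Δ xR) (hℓu : ℓ < u)
    (Γ : ℝ → ℝ)
    (hΓ : ∀ x, Γ x = -Real.log (x - xL) - Real.log (xR - x)
      - Real.log (Δ + x) - Real.log (Δ - x))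
    (xstar : ℝ) (hmem : xstar ∈ Set.Ioo ℓ u) (hmin : IsMinOn Γ (Set.Ioo ℓ u) xstar)
    (ε : ℝ) (hε0 : 0 < ε) (hε1 : ε ≤ 1 / 36)
    (x : ℝ) (hx : x ∈ Set.Ioo ℓ u) (hgap : Γ x - Γ xstar ≤ ε) :
    x ∈ Set.Icc (ℓ + (u - ℓ) / 4) (u - (u - ℓ) / 4) ∧
    xstar ∈ Set.Icc (ℓ + (u - ℓ) / 4) (u - (u - ℓ) / 4) ∧
    |deriv Γ x| ≤ (32 / (u - ℓ)) * Real.sqrt ε :=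
  stmt_12_general xL xR Δ ℓ u hℓ hu hℓu Γ hΓ xstar hmem hmin ε hε1 x hx hgap
end

section
/- For each j ∈ {1,…,n}, set ℓ_j := max(-Δ, x_{L,j}), u_j := min(Δ, x_{R,j}), and define Γ_j : (ℓ_j, u_j) → ℝ by Γ_j(x) := -log(x - x_{L,j}) - log(x_{R,j} - x) - log(Δ + x) - log(Δ - x); let δ := min_j (u_j - ℓ_j) > 0 and ε := min{ (δ·Δ/(2048·√n))², 1/36 }. Suppose x ∈ Ω is a vector whose components x_j ∈ (ℓ_j, u_j) satisfy Γ_j(x_j) - min Γ_j ≤ ε for every j. Then ‖∇Γ̂(x)‖₂ ≤ Δ/64. -/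
/-!
Write `F` for the derivative of the one-dimensional barrier
`t ↦ -log (t - a) - log (b - t) - log (t - a') - log (b' - t)` on `(ℓ, u) = (a, b) ∩ (a', b')`.
The walls nearest to `t` dominate: increments of `F` lie between one and two times the
increments of the model derivative `(u - t)⁻¹ - (t - ℓ)⁻¹`. Hence `F` is increasing, and
`F m = 0` at the minimiser `m` puts `m` in the middle third of `(ℓ, u)`.

For `m ≤ x` with gap `ε`, the tangent line at the midpoint `c` of `[m, x]` gives
`F c * (x - c) ≤ ε`; with the lower comparison this yields `x - m ≤ 2√ε · dist(m, wall)`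
on both sides, and the upper comparison then bounds `F x` by `32√ε / (u - ℓ)`.
The case `x ≤ m` follows by reflecting `t ↦ -t`. With `√ε ≤ δΔ / (2048√n)` every
coordinate of the gradient is at most `Δ / (64√n)`, so the gradient has norm at most `Δ / 64`.
-/

open Real Set

lemma inv_sub_sub_inv_sub_le_of_le {w c p q : ℝ} (hpq : p ≤ q) (hqw : q < w) (hwc : w ≤ c) :
    (c - q)⁻¹ - (c - p)⁻¹ ≤ (w - q)⁻¹ - (w - p)⁻¹ := by
  rw [inv_sub_inv (by linarith) (by linarith), inv_sub_inv (by linarith) (by linarith),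
    sub_sub_sub_cancel_left, sub_sub_sub_cancel_left]
  have : 0 < w - q := by linarith
  have : 0 < w - p := by linarith
  gcongr
  linarith

lemma inv_min_sub_sub_inv_bounds {c c' p q : ℝ} (hpq : p ≤ q) (hq : q < min c c') :
    (min c c' - q)⁻¹ - (min c c' - p)⁻¹ ≤
        ((c - q)⁻¹ - (c - p)⁻¹) + ((c' - q)⁻¹ - (c' - p)⁻¹) ∧
      ((c - q)⁻¹ - (c - p)⁻¹) + ((c' - q)⁻¹ - (c' - p)⁻¹) ≤
        2 * ((min c c' - q)⁻¹ - (min c c' - p)⁻¹) := by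
  have h := inv_sub_sub_inv_sub_le_of_le hpq hq (min_le_left c c')
  have h' := inv_sub_sub_inv_sub_le_of_le hpq hq (min_le_right c c')
  have h0 := sub_nonneg.2 (inv_anti₀ (by linarith [min_le_left c c']) (sub_le_sub_left hpq c))
  have h0' := sub_nonneg.2 (inv_anti₀ (by linarith [min_le_right c c']) (sub_le_sub_left hpq c'))
  rcases min_choice c c' with e | e <;> rw [e] at h h' ⊢ <;> constructor <;> linarith

lemma inv_sub_max_sub_inv_bounds {a a' p q : ℝ} (hp : max a a' < p) (hpq : p ≤ q) :
    (p - max a a')⁻¹ - (q - max a a')⁻¹ ≤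
        ((p - a)⁻¹ - (q - a)⁻¹) + ((p - a')⁻¹ - (q - a')⁻¹) ∧
      ((p - a)⁻¹ - (q - a)⁻¹) + ((p - a')⁻¹ - (q - a')⁻¹) ≤
        2 * ((p - max a a')⁻¹ - (q - max a a')⁻¹) := by
  have := inv_min_sub_sub_inv_bounds (c := -a) (c' := -a') (neg_le_neg hpq)
    (by rwa [min_neg_neg, neg_lt_neg_iff])
  simpa only [min_neg_neg, neg_sub_neg] using this

lemma inv_min_sub_bounds {c c' t : ℝ} (ht : t < min c c') :
    (min c c' - t)⁻¹ ≤ (c - t)⁻¹ + (c' - t)⁻¹ ∧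
      (c - t)⁻¹ + (c' - t)⁻¹ ≤ 2 * (min c c' - t)⁻¹ := by
  have h := inv_anti₀ (sub_pos.2 ht) (sub_le_sub_right (min_le_left c c') t)
  have h' := inv_anti₀ (sub_pos.2 ht) (sub_le_sub_right (min_le_right c c') t)
  have : 0 < (c - t)⁻¹ := inv_pos.2 (by linarith [min_le_left c c'])
  have : 0 < (c' - t)⁻¹ := inv_pos.2 (by linarith [min_le_right c c'])
  rcases min_choice c c' with e | e <;> rw [e] at h h' ⊢ <;> constructor <;> linarith

lemma inv_sub_max_bounds {a a' t : ℝ} (ht : max a a' < t) :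
    (t - max a a')⁻¹ ≤ (t - a)⁻¹ + (t - a')⁻¹ ∧
      (t - a)⁻¹ + (t - a')⁻¹ ≤ 2 * (t - max a a')⁻¹ := by
  have := inv_min_sub_bounds (c := -a) (c' := -a') (t := -t) (by rwa [min_neg_neg, neg_lt_neg_iff])
  simpa only [min_neg_neg, neg_sub_neg] using this

lemma sub_le_sqrt_mul_of_inv_sub_inv_mul_le {s r ε : ℝ} (hs : 0 < s) (hsr : s ≤ r)
    (h : (s⁻¹ - r⁻¹) * (r - s) ≤ ε) : r - s ≤ √ε * r := by
  have hr : 0 < r := hs.trans_le hsr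
  rw [inv_sub_inv hs.ne' hr.ne', div_mul_eq_mul_div, div_le_iff₀ (by positivity)] at h
  have hε : 0 ≤ ε := by
    by_contra! hε
    nlinarith [mul_pos hs hr, mul_self_nonneg (r - s)]
  calc r - s = √((r - s) ^ 2) := (Real.sqrt_sq (by linarith)).symm
    _ ≤ √(ε * r ^ 2) :=
        Real.sqrt_le_sqrt (by nlinarith [mul_nonneg hε (mul_nonneg (sub_nonneg.2 hsr) hr.le)])
    _ = √ε * r := by rw [Real.sqrt_mul hε, Real.sqrt_sq hr.le]

lemma two_mul_inv_sub_inv_add_le_of_balanced {α β d s : ℝ} (hα : 0 < α) (hβ : 0 < β)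
    (hd : 0 ≤ d) (hs : 0 ≤ s) (hs6 : s ≤ 1 / 6) (hβα : β ≤ 2 * α) (hαβ : α ≤ 2 * β)
    (hdβ : d ≤ 2 * s * β) (hdα : d ≤ 2 * s * (α + d)) :
    2 * (((β - d)⁻¹ - β⁻¹) + (α⁻¹ - (α + d)⁻¹)) ≤ 32 * s / (α + β) := by
  have hβd : 2 * β ≤ 3 * (β - d) := by nlinarith
  have hR : (β - d)⁻¹ - β⁻¹ ≤ 3 * s / β := by
    rw [inv_sub_inv (by linarith) hβ.ne', sub_sub_cancel, div_le_div_iff₀ (by nlinarith) hβ]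
    nlinarith
  have hL : α⁻¹ - (α + d)⁻¹ ≤ 2 * s / α := by
    rw [inv_sub_inv hα.ne' (by linarith), add_sub_cancel_left, div_le_div_iff₀ (by nlinarith) hα]
    nlinarith
  have hR' : 3 * s / β ≤ 9 * s / (α + β) := by
    rw [div_le_div_iff₀ hβ (by linarith)]
    nlinarith
  have hL' : 2 * s / α ≤ 6 * s / (α + β) := by
    rw [div_le_div_iff₀ hα (by linarith)]
    nlinarith
  have h32 : 2 * (9 * s / (α + β) + 6 * s / (α + β)) ≤ 32 * s / (α + β) := by
    rw [← add_div, mul_div_assoc', div_le_div_iff_of_pos_right (by linarith)]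
    linarith
  linarith

noncomputable def barrier (a b a' b' t : ℝ) : ℝ :=
  -log (t - a) - log (b - t) - log (t - a') - log (b' - t)

noncomputable def barrierDeriv (a b a' b' t : ℝ) : ℝ :=
  (b - t)⁻¹ + (b' - t)⁻¹ - (t - a)⁻¹ - (t - a')⁻¹

section Barrier

variable {a b a' b' : ℝ}

lemma barrier_neg (t : ℝ) : barrier a b a' b' (-t) = barrier (-b) (-a) (-b') (-a') t := by
  unfold barrier
  ring_nf

lemma barrierDeriv_neg (t : ℝ) :
    barrierDeriv a b a' b' (-t) = -barrierDeriv (-b) (-a) (-b') (-a') t := by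
  unfold barrierDeriv
  ring_nf

lemma hasDerivAt_barrier {t : ℝ} (ht : t ∈ Ioo (max a a') (min b b')) :
    HasDerivAt (barrier a b a' b') (barrierDeriv a b a' b' t) t := by
  simp only [mem_Ioo, max_lt_iff, lt_min_iff] at ht
  obtain ⟨⟨ha, ha'⟩, hb, hb'⟩ := ht
  have hl (c : ℝ) (hc : c < t) : HasDerivAt (fun s => log (s - c)) (t - c)⁻¹ t := by
    simpa using ((hasDerivAt_id t).sub_const c).log (sub_pos.2 hc).ne'
  have hr (c : ℝ) (hc : t < c) : HasDerivAt (fun s => log (c - s)) (-(c - t)⁻¹) t := by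
    simpa [neg_div] using ((hasDerivAt_id t).const_sub c).log (sub_pos.2 hc).ne'
  exact ((((hl a ha).neg.sub (hr b hb)).sub (hl a' ha')).sub (hr b' hb')).congr_deriv
    (by unfold barrierDeriv; ring)

lemma barrierDeriv_sub_bounds {p q : ℝ} (hp : max a a' < p) (hpq : p ≤ q) (hq : q < min b b') :
    ((min b b' - q)⁻¹ - (min b b' - p)⁻¹) + ((p - max a a')⁻¹ - (q - max a a')⁻¹) ≤
        barrierDeriv a b a' b' q - barrierDeriv a b a' b' p ∧
      barrierDeriv a b a' b' q - barrierDeriv a b a' b' p ≤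
        2 * (((min b b' - q)⁻¹ - (min b b' - p)⁻¹) + ((p - max a a')⁻¹ - (q - max a a')⁻¹)) := by
  obtain ⟨hR, hR'⟩ := inv_min_sub_sub_inv_bounds (c := b) (c' := b') hpq hq
  obtain ⟨hL, hL'⟩ := inv_sub_max_sub_inv_bounds (a := a) (a' := a') hp hpq
  simp only [barrierDeriv]
  constructor <;> linarith

lemma barrierDeriv_monotoneOn :
    MonotoneOn (barrierDeriv a b a' b') (Ioo (max a a') (min b b')) := by
  intro p hp q hq hpq
  have hR := sub_nonneg.2 (inv_anti₀ (sub_pos.2 hq.2) (sub_le_sub_left hpq (min b b')))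
  have hL := sub_nonneg.2 (inv_anti₀ (sub_pos.2 hp.1) (sub_le_sub_right hpq (max a a')))
  linarith [(barrierDeriv_sub_bounds hp.1 hpq hq.2).1]

lemma sub_le_two_mul_of_barrierDeriv_eq_zero {m : ℝ} (hm : m ∈ Ioo (max a a') (min b b'))
    (h0 : barrierDeriv a b a' b' m = 0) :
    min b b' - m ≤ 2 * (m - max a a') ∧ m - max a a' ≤ 2 * (min b b' - m) := by
  obtain ⟨hR, hR'⟩ := inv_min_sub_bounds (c := b) (c' := b') hm.2
  obtain ⟨hL, hL'⟩ := inv_sub_max_bounds (a := a) (a' := a') hm.1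
  have hu : 0 < min b b' - m := sub_pos.2 hm.2
  have hl : 0 < m - max a a' := sub_pos.2 hm.1
  simp only [barrierDeriv] at h0
  have h1 : (m - max a a')⁻¹ ≤ 2 * (min b b' - m)⁻¹ := by linarith
  have h2 : (min b b' - m)⁻¹ ≤ 2 * (m - max a a')⁻¹ := by linarith
  rw [← div_eq_mul_inv, inv_eq_one_div, div_le_div_iff₀ hl hu] at h1
  rw [← div_eq_mul_inv, inv_eq_one_div, div_le_div_iff₀ hu hl] at h2
  constructor <;> linarith

lemma barrierDeriv_mul_sub_le {p q : ℝ} (hp : p ∈ Ioo (max a a') (min b b'))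
    (hq : q ∈ Ioo (max a a') (min b b')) (hpq : p ≤ q) :
    barrierDeriv a b a' b' p * (q - p) ≤ barrier a b a' b' q - barrier a b a' b' p := by
  have hsub : Icc p q ⊆ Ioo (max a a') (min b b') := Icc_subset_Ioo hp.1 hq.2
  refine (convex_Icc p q).mul_sub_le_image_sub_of_le_deriv
    (fun t ht => (hasDerivAt_barrier (hsub ht)).continuousAt.continuousWithinAt) ?_ ?_
    p (left_mem_Icc.2 hpq) q (right_mem_Icc.2 hpq) hpq
  · rw [interior_Icc]
    exact fun t ht => (hasDerivAt_barrier (hsub (Ioo_subset_Icc_self ht))).differentiableAt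
      |>.differentiableWithinAt
  · rw [interior_Icc]
    intro t ht
    rw [(hasDerivAt_barrier (hsub (Ioo_subset_Icc_self ht))).deriv]
    exact barrierDeriv_monotoneOn hp (hsub (Ioo_subset_Icc_self ht)) ht.1.le

theorem barrierDeriv_nonneg_and_le_of_le {m x ε : ℝ} (hm : m ∈ Ioo (max a a') (min b b'))
    (hmin : IsMinOn (barrier a b a' b') (Ioo (max a a') (min b b')) m)
    (hx : x ∈ Ioo (max a a') (min b b')) (hmx : m ≤ x)
    (hgap : barrier a b a' b' x - barrier a b a' b' m ≤ ε) (hε : ε ≤ 1 / 36) :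
    0 ≤ barrierDeriv a b a' b' x ∧
      barrierDeriv a b a' b' x ≤ 32 * √ε / (min b b' - max a a') := by
  have h0 : barrierDeriv a b a' b' m = 0 :=
    (hmin.isLocalMin (Ioo_mem_nhds hm.1 hm.2)).hasDerivAt_eq_zero (hasDerivAt_barrier hm)
  refine ⟨h0 ▸ barrierDeriv_monotoneOn hm hx hmx, ?_⟩
  obtain ⟨hβα, hαβ⟩ := sub_le_two_mul_of_barrierDeriv_eq_zero hm h0
  set c := (m + x) / 2 with hc_def
  have hmc : m ≤ c := by linarith
  have hcx : c ≤ x := by linarith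
  have hc : c ∈ Ioo (max a a') (min b b') := ⟨by linarith [hm.1], by linarith [hx.2]⟩
  have hFc : barrierDeriv a b a' b' c * (x - c) ≤ ε :=
    (barrierDeriv_mul_sub_le hc hx hcx).trans (by linarith [isMinOn_iff.1 hmin c hc])
  have hR0 := sub_nonneg.2 (inv_anti₀ (sub_pos.2 hc.2) (sub_le_sub_left hmc (min b b')))
  have hL0 := sub_nonneg.2 (inv_anti₀ (sub_pos.2 hm.1) (sub_le_sub_right hmc (max a a')))
  have hFcm := (barrierDeriv_sub_bounds hm.1 hmc hc.2).1
  have hdβ : c - m ≤ √ε * (min b b' - m) := by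
    have := sub_le_sqrt_mul_of_inv_sub_inv_mul_le (ε := ε) (sub_pos.2 hc.2)
      (sub_le_sub_left hmc (min b b')) ?_
    · rwa [sub_sub_sub_cancel_left] at this
    rw [sub_sub_sub_cancel_left, show c - m = x - c by linarith]
    exact (mul_le_mul_of_nonneg_right (by linarith) (by linarith)).trans hFc
  have hdα : c - m ≤ √ε * (c - max a a') := by
    have := sub_le_sqrt_mul_of_inv_sub_inv_mul_le (ε := ε) (sub_pos.2 hm.1)
      (sub_le_sub_right hmc (max a a')) ?_
    · rwa [sub_sub_sub_cancel_right] at this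
    rw [sub_sub_sub_cancel_right, show c - m = x - c by linarith]
    exact (mul_le_mul_of_nonneg_right (by linarith) (by linarith)).trans hFc
  have hs6 : √ε ≤ 1 / 6 := (Real.sqrt_le_left (by norm_num)).2 (by linarith)
  have hFx := (barrierDeriv_sub_bounds hm.1 hmx hx.2).2
  have key := two_mul_inv_sub_inv_add_le_of_balanced (sub_pos.2 hm.1) (sub_pos.2 hm.2)
    (sub_nonneg.2 hmx) (Real.sqrt_nonneg ε) hs6 hβα hαβ (by linarith)
    (by nlinarith [Real.sqrt_nonneg ε])
  rw [sub_sub_sub_cancel_right, sub_add_sub_cancel', sub_add_sub_cancel'] at key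
  linarith

theorem abs_barrierDeriv_le {m x ε : ℝ} (hm : m ∈ Ioo (max a a') (min b b'))
    (hmin : IsMinOn (barrier a b a' b') (Ioo (max a a') (min b b')) m)
    (hx : x ∈ Ioo (max a a') (min b b'))
    (hgap : barrier a b a' b' x - barrier a b a' b' m ≤ ε) (hε : ε ≤ 1 / 36) :
    |barrierDeriv a b a' b' x| ≤ 32 * √ε / (min b b' - max a a') := by
  wlog hmx : m ≤ x generalizing a b a' b' m x
  · have hIoo {t : ℝ} : -t ∈ Ioo (max (-b) (-b')) (min (-a) (-a')) ↔
        t ∈ Ioo (max a a') (min b b') := by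
      rw [max_neg_neg, min_neg_neg, neg_mem_Ioo_iff, neg_neg, neg_neg]
    have hmin' : IsMinOn (barrier (-b) (-a) (-b') (-a'))
        (Ioo (max (-b) (-b')) (min (-a) (-a'))) (-m) := isMinOn_iff.2 fun t ht => by
      simp only [← barrier_neg, neg_neg]
      exact isMinOn_iff.1 hmin (-t) (hIoo.1 (by rwa [neg_neg]))
    have := this (hIoo.2 hm) hmin' (hIoo.2 hx) (by simpa only [← barrier_neg, neg_neg])
      (by linarith)
    simpa only [barrierDeriv_neg, abs_neg, neg_neg, max_neg_neg, min_neg_neg, neg_sub_neg]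
      using this
  obtain ⟨h0, h⟩ := barrierDeriv_nonneg_and_le_of_le hm hmin hx hmx hgap hε
  rwa [abs_of_nonneg h0]

end Barrier

theorem hasGradientAt_sum_apply {ι : Type*} [Fintype ι] {g : ι → ℝ → ℝ} {g' : ι → ℝ}
    {x : EuclideanSpace ℝ ι} (hg : ∀ i, HasDerivAt (g i) (g' i) (x i)) :
    HasGradientAt (fun y : EuclideanSpace ℝ ι => ∑ i, g i (y i)) (WithLp.toLp 2 g') x := by
  rw [hasGradientAt_iff_hasFDerivAt]
  have hcomp (i : ι) : HasFDerivAt (fun y : EuclideanSpace ℝ ι => g i (y i))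
      (g' i • EuclideanSpace.proj i) x :=
    (hg i).comp_hasFDerivAt x
      (EuclideanSpace.proj i : EuclideanSpace ℝ ι →L[ℝ] ℝ).hasFDerivAt
  refine (HasFDerivAt.fun_sum (u := Finset.univ) fun i _ => hcomp i).congr_fderiv ?_
  ext v
  simp [PiLp.inner_apply, mul_comm]

theorem EuclideanSpace.norm_le_sqrt_card_mul {ι : Type*} [Fintype ι]
    {v : EuclideanSpace ℝ ι} {C : ℝ} (hC : 0 ≤ C) (hv : ∀ i, |v i| ≤ C) :
    ‖v‖ ≤ √(Fintype.card ι) * C := by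
  rw [EuclideanSpace.norm_eq, ← Real.sqrt_sq hC, ← Real.sqrt_mul (Nat.cast_nonneg _)]
  gcongr
  calc ∑ i, ‖v i‖ ^ 2 ≤ ∑ _ : ι, C ^ 2 := by
        gcongr with i
        rw [Real.norm_eq_abs]
        exact hv i
    _ = _ := by simp

/-- With `Γ_j` the component barrier functions on `(ℓ_j, u_j)`,
`δ = min_j (u_j - ℓ_j) > 0` and `ε = min{(δ·Δ/(2048·√n))², 1/36}`, if `x ∈ Ω` has
components satisfying `Γ_j(x_j) - min Γ_j ≤ ε` for every `j`, then
`‖∇Γ̂(x)‖₂ ≤ Δ/64` where `Γ̂ = Γ_LR + Γ_Δ`. -/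
theorem stmt_13 (n : ℕ) (hn : 0 < n)
    (xL xR : EuclideanSpace ℝ (Fin n)) (Δ : ℝ) (hΔ : 0 < Δ)
    (ℓ u : Fin n → ℝ)
    (hℓ : ∀ j, ℓ j = max (-Δ) (xL j)) (hu : ∀ j, u j = min Δ (xR j))
    (Γj : Fin n → ℝ → ℝ)
    (hΓj : ∀ j x, Γj j x = -Real.log (x - xL j) - Real.log (xR j - x)
      - Real.log (Δ + x) - Real.log (Δ - x))
    (δ ε : ℝ)
    (hδ : δ = ⨅ j, (u j - ℓ j)) (hδpos : 0 < δ)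
    (hε : ε = min ((δ * Δ / (2048 * Real.sqrt n)) ^ 2) (1 / 36))
    (Γhat : EuclideanSpace ℝ (Fin n) → ℝ)
    (hΓhat : ∀ y, Γhat y = (-∑ j, (Real.log (y j - xL j) + Real.log (xR j - y j)))
      + (-∑ j, (Real.log (Δ + y j) + Real.log (Δ - y j))))
    (x : EuclideanSpace ℝ (Fin n))
    (hx : ∀ j, ℓ j < x j ∧ x j < u j)
    (m : Fin n → ℝ)
    (hm : ∀ j, m j ∈ Set.Ioo (ℓ j) (u j) ∧ IsMinOn (Γj j) (Set.Ioo (ℓ j) (u j)) (m j))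
    (hxopt : ∀ j, Γj j (x j) - Γj j (m j) ≤ ε) :
    ‖gradient Γhat x‖ ≤ Δ / 64 := by
  have hI (j : Fin n) : Ioo (ℓ j) (u j) = Ioo (max (xL j) (-Δ)) (min (xR j) Δ) := by
    rw [hℓ, hu, max_comm, min_comm]
  have hΓj' (j : Fin n) : Γj j = barrier (xL j) (xR j) (-Δ) Δ := funext fun t => by
    rw [hΓj, barrier, sub_neg_eq_add, add_comm t Δ]
  have hΓhat' : Γhat = fun y => ∑ j, barrier (xL j) (xR j) (-Δ) Δ (y j) := funext fun y => by
    rw [hΓhat, ← Finset.sum_neg_distrib, ← Finset.sum_neg_distrib, ← Finset.sum_add_distrib]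
    refine Finset.sum_congr rfl fun j _ => ?_
    rw [barrier, sub_neg_eq_add, add_comm (y j) Δ]
    ring
  have hxI (j : Fin n) : x j ∈ Ioo (max (xL j) (-Δ)) (min (xR j) Δ) := hI j ▸ hx j
  rw [hΓhat', (hasGradientAt_sum_apply fun j => hasDerivAt_barrier (hxI j)).gradient]
  have hsn : 0 < √(n : ℝ) := Real.sqrt_pos.2 (Nat.cast_pos.2 hn)
  have hsε : √ε ≤ δ * Δ / (2048 * √n) :=
    (Real.sqrt_le_left (by positivity)).2 (hε ▸ min_le_left _ _)
  have hcoord (j : Fin n) : |barrierDeriv (xL j) (xR j) (-Δ) Δ (x j)| ≤ Δ / (64 * √n) := by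
    obtain ⟨hmj, hminj⟩ := hm j
    rw [hI j] at hmj hminj
    rw [hΓj'] at hminj
    have hδj : δ ≤ min (xR j) Δ - max (xL j) (-Δ) :=
      hδ ▸ (Finite.ciInf_le (fun j => u j - ℓ j) j).trans_eq (by rw [hℓ, hu, max_comm, min_comm])
    calc _ ≤ 32 * √ε / (min (xR j) Δ - max (xL j) (-Δ)) :=
          abs_barrierDeriv_le hmj hminj (hxI j) (hΓj' j ▸ hxopt j) (hε ▸ min_le_right _ _)
      _ ≤ 32 * √ε / δ := by gcongr
      _ ≤ 32 * (δ * Δ / (2048 * √n)) / δ := by gcongr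
      _ = Δ / (64 * √n) := by field_simp; ring
  calc _ ≤ √(Fintype.card (Fin n)) * (Δ / (64 * √n)) :=
        EuclideanSpace.norm_le_sqrt_card_mul (by positivity) hcoord
    _ = Δ / 64 := by rw [Fintype.card_fin]; field_simp
end

section
/- Assume ψ := q̂ + (τ_F/2)·Γ_LR is convex on Ω. Then for every parameter τ ∈ [τ_F, ∞), the function φ²_τ(x) := 8·((2/τ)·q̂(x) + 2·Γ̂(x)) is self-concordant on Ω. -/
set_option maxHeartbeats 1000000

open Filter Set Topology

section AuxSC15

lemma sc15_two_superadd {a b : ℝ} (ha : 0 ≤ a) (hb : 0 ≤ b) :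
    a ^ ((3:ℝ)/2) + b ^ ((3:ℝ)/2) ≤ (a + b) ^ ((3:ℝ)/2) := by
  have h := NNReal.add_rpow_le_rpow_add a.toNNReal b.toNNReal (by norm_num : (1:ℝ) ≤ 3/2)
  have h2 := NNReal.coe_le_coe.2 h
  rw [NNReal.coe_add, NNReal.coe_rpow, NNReal.coe_rpow, NNReal.coe_rpow, NNReal.coe_add,
    Real.coe_toNNReal _ ha, Real.coe_toNNReal _ hb] at h2
  exact h2

lemma sc15_sum_rpow_le {ι : Type*} (s : Finset ι) (f : ι → ℝ) (hf : ∀ i ∈ s, 0 ≤ f i) :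
    (∑ i ∈ s, f i ^ ((3:ℝ)/2)) ≤ (∑ i ∈ s, f i) ^ ((3:ℝ)/2) := by
  classical
  induction s using Finset.induction_on with
  | empty => simp
  | @insert a s ha ih =>
    rw [Finset.sum_insert ha, Finset.sum_insert ha]
    have h1 : 0 ≤ f a := hf a (Finset.mem_insert_self a s)
    have h2 : ∀ i ∈ s, 0 ≤ f i := fun i hi => hf i (Finset.mem_insert_of_mem hi)
    calc f a ^ ((3:ℝ)/2) + ∑ i ∈ s, f i ^ ((3:ℝ)/2)
        ≤ f a ^ ((3:ℝ)/2) + (∑ i ∈ s, f i) ^ ((3:ℝ)/2) := by gcongr; exact ih h2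
      _ ≤ _ := sc15_two_superadd h1 (Finset.sum_nonneg h2)

lemma sc15_deriv_chain {G0 G1 G2 G3 : ℝ → ℝ} {O : Set ℝ} (hO : IsOpen O) (h0 : (0:ℝ) ∈ O)
    (h1 : ∀ t ∈ O, HasDerivAt G0 (G1 t) t) (h2 : ∀ t ∈ O, HasDerivAt G1 (G2 t) t)
    (h3 : ∀ t ∈ O, HasDerivAt G2 (G3 t) t) :
    deriv (deriv G0) 0 = G2 0 ∧ deriv (deriv (deriv G0)) 0 = G3 0 := by
  have e1 : ∀ t ∈ O, deriv G0 t = G1 t := fun t ht => (h1 t ht).deriv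
  have e2 : ∀ t ∈ O, deriv (deriv G0) t = G2 t := by
    intro t ht
    have hev : deriv G0 =ᶠ[nhds t] G1 := by
      filter_upwards [hO.mem_nhds ht] using e1
    rw [hev.deriv_eq]
    exact (h2 t ht).deriv
  have e3 : deriv (deriv (deriv G0)) 0 = G3 0 := by
    have hev : deriv (deriv G0) =ᶠ[nhds 0] G2 := by
      filter_upwards [hO.mem_nhds h0] using e2
    rw [hev.deriv_eq]
    exact (h3 0 h0).deriv
  exact ⟨e2 0 h0, e3⟩

lemma sc15_nonneg_of_monotoneOn {f : ℝ → ℝ} {O : Set ℝ} {a : ℝ} (hO : IsOpen O)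
    (h0 : (0:ℝ) ∈ O) (hm : MonotoneOn f O) (hf : HasDerivAt f a 0) : 0 ≤ a := by
  have ht := hasDerivAt_iff_tendsto_slope.mp hf
  have hmono' : Tendsto (slope f 0) (𝓝[>] 0) (𝓝 a) :=
    ht.mono_left (nhdsWithin_mono 0 (fun y hy => by
      simpa using (ne_of_gt (mem_Ioi.mp hy))))
  refine ge_of_tendsto hmono' ?_
  filter_upwards [self_mem_nhdsWithin, mem_nhdsWithin_of_mem_nhds (hO.mem_nhds h0)] with t htp htO
  have h1 : f 0 ≤ f t := hm h0 htO (le_of_lt (mem_Ioi.mp htp))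
  rw [slope_def_field]
  have h2 : (0:ℝ) < t := mem_Ioi.mp htp
  apply div_nonneg (by linarith) (by linarith)

lemma sc15_line_reduce {E : Type*} [NormedAddCommGroup E] [NormedSpace ℝ E]
    {f : E → ℝ} {U : Set E} (hU : IsOpen U) {x : E} (hx : x ∈ U)
    (hf : ContDiffOn ℝ (⊤ : ℕ∞) f U) (v : E) :
    iteratedFDeriv ℝ 2 f x ![v, v] = deriv (deriv (fun t : ℝ => f (x + t • v))) 0 ∧
      iteratedFDeriv ℝ 3 f x ![v, v, v] =
        deriv (deriv (deriv (fun t : ℝ => f (x + t • v)))) 0 := by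
  have hf1 : ContDiffOn ℝ (⊤ : ℕ∞) (fderiv ℝ f) U := hf.fderiv_of_isOpen hU (by simp)
  have hf2 : ContDiffOn ℝ (⊤ : ℕ∞) (fderiv ℝ (fderiv ℝ f)) U := hf1.fderiv_of_isOpen hU (by simp)
  have hd : ∀ y ∈ U, DifferentiableAt ℝ f y := fun y hy =>
    (hf.differentiableOn (by simp)).differentiableAt (hU.mem_nhds hy)
  have hd1 : ∀ y ∈ U, DifferentiableAt ℝ (fderiv ℝ f) y := fun y hy =>
    (hf1.differentiableOn (by simp)).differentiableAt (hU.mem_nhds hy)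
  have hd2 : ∀ y ∈ U, DifferentiableAt ℝ (fderiv ℝ (fderiv ℝ f)) y := fun y hy =>
    (hf2.differentiableOn (by simp)).differentiableAt (hU.mem_nhds hy)
  have hL : ∀ t : ℝ, HasDerivAt (fun s : ℝ => x + s • v) v t := by
    intro t
    simpa using ((hasDerivAt_id t).smul_const v).const_add x
  have hO : IsOpen ((fun t : ℝ => x + t • v) ⁻¹' U) :=
    hU.preimage (by fun_prop)
  have h0 : (0:ℝ) ∈ ((fun t : ℝ => x + t • v) ⁻¹' U) := by
    simp [Set.mem_preimage, hx]
  have h1 : ∀ t ∈ ((fun t : ℝ => x + t • v) ⁻¹' U),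
      HasDerivAt (fun s : ℝ => f (x + s • v)) (fderiv ℝ f (x + t • v) v) t := by
    intro t ht
    exact ((hd _ ht).hasFDerivAt).comp_hasDerivAt t (hL t)
  have h2 : ∀ t ∈ ((fun t : ℝ => x + t • v) ⁻¹' U),
      HasDerivAt (fun s : ℝ => fderiv ℝ f (x + s • v) v)
        (fderiv ℝ (fderiv ℝ f) (x + t • v) v v) t := by
    intro t ht
    have := (((hd1 _ ht).hasFDerivAt).comp_hasDerivAt t (hL t)).clm_apply
      (hasDerivAt_const t v)
    simpa using this
  have h3 : ∀ t ∈ ((fun t : ℝ => x + t • v) ⁻¹' U),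
      HasDerivAt (fun s : ℝ => fderiv ℝ (fderiv ℝ f) (x + s • v) v v)
        (fderiv ℝ (fderiv ℝ (fderiv ℝ f)) (x + t • v) v v v) t := by
    intro t ht
    have := ((((hd2 _ ht).hasFDerivAt).comp_hasDerivAt (𝕜 := ℝ) (F := E)
      (E := E →L[ℝ] E →L[ℝ] ℝ) t (hL t)).clm_apply
      (hasDerivAt_const t v)).clm_apply (hasDerivAt_const t v)
    simpa using this
  obtain ⟨hA, hB⟩ := sc15_deriv_chain hO h0 h1 h2 h3
  have hx0 : x + (0:ℝ) • v = x := by simp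
  constructor
  · rw [hA, hx0, iteratedFDeriv_two_apply]
    simp
  · rw [hB, hx0, iteratedFDeriv_succ_apply_right, iteratedFDeriv_two_apply]
    simp [Fin.init, Fin.last]

lemma sc15_haff (a b t : ℝ) : HasDerivAt (fun s : ℝ => a + s * b) b t := by
  simpa using ((hasDerivAt_id t).mul_const b).const_add a

lemma sc15_bar_d1 {m : ℕ} (p q : Fin m → ℝ) {t : ℝ} (hp : ∀ j, p j + t * q j ≠ 0) :
    HasDerivAt (fun s : ℝ => -∑ j, Real.log (p j + s * q j))
      (-∑ j, q j / (p j + t * q j)) t :=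
  (HasDerivAt.fun_sum (fun j _ => (sc15_haff (p j) (q j) t).log (hp j))).neg

lemma sc15_bar_d2 {m : ℕ} (p q : Fin m → ℝ) {t : ℝ} (hp : ∀ j, p j + t * q j ≠ 0) :
    HasDerivAt (fun s : ℝ => -∑ j, q j / (p j + s * q j))
      (∑ j, (q j) ^ 2 / (p j + t * q j) ^ 2) t := by
  have h := (HasDerivAt.fun_sum (fun j (_ : j ∈ Finset.univ) =>
    (hasDerivAt_const t (q j)).div (sc15_haff (p j) (q j) t) (hp j))).neg
  refine h.congr_deriv ?_
  rw [← Finset.sum_neg_distrib]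
  exact Finset.sum_congr rfl fun j _ => by ring

lemma sc15_bar_d3 {m : ℕ} (p q : Fin m → ℝ) {t : ℝ} (hp : ∀ j, p j + t * q j ≠ 0) :
    HasDerivAt (fun s : ℝ => ∑ j, (q j) ^ 2 / (p j + s * q j) ^ 2)
      (-∑ j, 2 * (q j) ^ 3 / (p j + t * q j) ^ 3) t := by
  have h := HasDerivAt.fun_sum (fun j (_ : j ∈ Finset.univ) =>
    (hasDerivAt_const t ((q j) ^ 2)).div ((sc15_haff (p j) (q j) t).pow 2)
      (pow_ne_zero 2 (hp j)))
  refine h.congr_deriv ?_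
  rw [← Finset.sum_neg_distrib]
  refine Finset.sum_congr rfl fun j _ => ?_
  have hD : p j + t * q j ≠ 0 := hp j
  simp only [Pi.pow_apply]
  field_simp
  ring

lemma sc15_quad_d1 {m : ℕ} (Q : Matrix (Fin m) (Fin m) ℝ) (c x v : Fin m → ℝ) (t : ℝ) :
    HasDerivAt (fun s : ℝ => (1/2) * ∑ i, ∑ j, Q i j * (x i + s * v i) * (x j + s * v j)
        + ∑ i, c i * (x i + s * v i))
      ((1/2) * ∑ i, ∑ j, (Q i j * v i * (x j + t * v j) + Q i j * (x i + t * v i) * v j)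
        + ∑ i, c i * v i) t := by
  exact ((HasDerivAt.fun_sum (fun i _ => HasDerivAt.fun_sum (fun j _ =>
    ((sc15_haff (x i) (v i) t).const_mul (Q i j)).mul (sc15_haff (x j) (v j) t)))).const_mul
    (1/2)).add (HasDerivAt.fun_sum (fun i _ => (sc15_haff (x i) (v i) t).const_mul (c i)))

lemma sc15_quad_d2 {m : ℕ} (Q : Matrix (Fin m) (Fin m) ℝ) (c x v : Fin m → ℝ) (t : ℝ) :
    HasDerivAt (fun s : ℝ => (1/2) * ∑ i, ∑ j,
        (Q i j * v i * (x j + s * v j) + Q i j * (x i + s * v i) * v j)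
        + ∑ i, c i * v i)
      (∑ i, ∑ j, Q i j * v i * v j) t := by
  have h := ((HasDerivAt.fun_sum (fun (i : Fin m) (_ : i ∈ Finset.univ) =>
      HasDerivAt.fun_sum (fun (j : Fin m) (_ : j ∈ Finset.univ) =>
    ((sc15_haff (x j) (v j) t).const_mul (Q i j * v i)).add
      (((sc15_haff (x i) (v i) t).const_mul (Q i j)).mul_const (v j))))).const_mul
    (1/2)).add (hasDerivAt_const t (∑ i, c i * v i))
  refine h.congr_deriv ?_
  rw [add_zero, Finset.mul_sum]
  refine Finset.sum_congr rfl fun i _ => ?_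
  rw [Finset.mul_sum]
  exact Finset.sum_congr rfl fun j _ => by ring

lemma sc15_abs_term {q d : ℝ} (hd : 0 < d) :
    |2 * q ^ 3 / d ^ 3| = 2 * (q ^ 2 / d ^ 2) ^ ((3:ℝ)/2) := by
  have h1 : q ^ 2 / d ^ 2 = (|q| / d) ^ 2 := by rw [div_pow, sq_abs]
  have h2 : ((|q| / d) ^ 2 : ℝ) ^ ((3:ℝ)/2) = (|q| / d) ^ (3:ℕ) := by
    rw [← Real.rpow_natCast (|q| / d) 2, ← Real.rpow_mul (by positivity),
      ← Real.rpow_natCast (|q| / d) 3]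
    norm_num
  rw [h1, h2, abs_div, abs_mul, abs_pow, abs_pow, abs_of_pos hd, abs_two, div_pow]
  ring

lemma sc15_bound {m : ℕ} (w d1 d2 d3 d4 : Fin m → ℝ)
    (hd1 : ∀ j, 0 < d1 j) (hd2 : ∀ j, 0 < d2 j) (hd3 : ∀ j, 0 < d3 j) (hd4 : ∀ j, 0 < d4 j)
    (D : ℝ)
    (hD8 : 8 * (∑ j, ((w j)^2/(d1 j)^2 + (w j)^2/(d2 j)^2)
      + ∑ j, ((w j)^2/(d3 j)^2 + (w j)^2/(d4 j)^2)) ≤ D) :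
    |8 * (0 + 2 * ((-∑ j, 2*(w j)^3/(d1 j)^3 + ∑ j, 2*(w j)^3/(d2 j)^3)
      + (-∑ j, 2*(w j)^3/(d3 j)^3 + ∑ j, 2*(w j)^3/(d4 j)^3)))| ≤ 2 * D ^ ((3:ℝ)/2) := by
  have hT : 8 * (∑ j, (((w j)^2/(d1 j)^2 + (w j)^2/(d2 j)^2)
      + ((w j)^2/(d3 j)^2 + (w j)^2/(d4 j)^2))) ≤ D := by
    simp only [Finset.sum_add_distrib] at hD8 ⊢; linarith
  have hsum0 : (0:ℝ) ≤ ∑ j, (((w j)^2/(d1 j)^2 + (w j)^2/(d2 j)^2)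
      + ((w j)^2/(d3 j)^2 + (w j)^2/(d4 j)^2)) := by
    apply Finset.sum_nonneg; intro j _; positivity
  have tri : ∀ (dd : Fin m → ℝ), (∀ j, 0 < dd j) →
      |∑ j, 2*(w j)^3/(dd j)^3| ≤ ∑ j, 2 * ((w j)^2/(dd j)^2) ^ ((3:ℝ)/2) := by
    intro dd hdd
    refine (Finset.abs_sum_le_sum_abs _ _).trans ?_
    exact Finset.sum_le_sum fun j _ => le_of_eq (sc15_abs_term (hdd j))
  have h1 := tri d1 hd1
  have h2 := tri d2 hd2
  have h3 := tri d3 hd3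
  have h4 := tri d4 hd4
  have step1 : |8 * (0 + 2 * ((-∑ j, 2*(w j)^3/(d1 j)^3 + ∑ j, 2*(w j)^3/(d2 j)^3)
      + (-∑ j, 2*(w j)^3/(d3 j)^3 + ∑ j, 2*(w j)^3/(d4 j)^3)))|
      ≤ 16 * (|∑ j, 2*(w j)^3/(d1 j)^3| + |∑ j, 2*(w j)^3/(d2 j)^3|
        + |∑ j, 2*(w j)^3/(d3 j)^3| + |∑ j, 2*(w j)^3/(d4 j)^3|) := by
    rw [show (8:ℝ) * (0 + 2 * ((-∑ j, 2*(w j)^3/(d1 j)^3 + ∑ j, 2*(w j)^3/(d2 j)^3)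
      + (-∑ j, 2*(w j)^3/(d3 j)^3 + ∑ j, 2*(w j)^3/(d4 j)^3)))
      = 16 * ((-∑ j, 2*(w j)^3/(d1 j)^3 + ∑ j, 2*(w j)^3/(d2 j)^3)
      + (-∑ j, 2*(w j)^3/(d3 j)^3 + ∑ j, 2*(w j)^3/(d4 j)^3)) from by ring]
    rw [abs_mul]
    have habs := abs_add_le (-∑ j, 2*(w j)^3/(d1 j)^3 + ∑ j, 2*(w j)^3/(d2 j)^3)
      (-∑ j, 2*(w j)^3/(d3 j)^3 + ∑ j, 2*(w j)^3/(d4 j)^3)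
    have t12 := abs_add_le (-∑ j, 2*(w j)^3/(d1 j)^3) (∑ j, 2*(w j)^3/(d2 j)^3)
    have t34 := abs_add_le (-∑ j, 2*(w j)^3/(d3 j)^3) (∑ j, 2*(w j)^3/(d4 j)^3)
    rw [abs_neg] at t12 t34
    have h16 : |(16:ℝ)| = 16 := by norm_num
    rw [h16]
    linarith [habs, t12, t34]
  have step2 : (16:ℝ) * (|∑ j, 2*(w j)^3/(d1 j)^3| + |∑ j, 2*(w j)^3/(d2 j)^3|
        + |∑ j, 2*(w j)^3/(d3 j)^3| + |∑ j, 2*(w j)^3/(d4 j)^3|)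
      ≤ 32 * ∑ j, ((((w j)^2/(d1 j)^2) ^ ((3:ℝ)/2) + ((w j)^2/(d2 j)^2) ^ ((3:ℝ)/2))
        + (((w j)^2/(d3 j)^2) ^ ((3:ℝ)/2) + ((w j)^2/(d4 j)^2) ^ ((3:ℝ)/2))) := by
    have e : ∑ j, ((((w j)^2/(d1 j)^2) ^ ((3:ℝ)/2) + ((w j)^2/(d2 j)^2) ^ ((3:ℝ)/2))
        + (((w j)^2/(d3 j)^2) ^ ((3:ℝ)/2) + ((w j)^2/(d4 j)^2) ^ ((3:ℝ)/2)))
        = ∑ j, ((w j)^2/(d1 j)^2) ^ ((3:ℝ)/2) + ∑ j, ((w j)^2/(d2 j)^2) ^ ((3:ℝ)/2)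
        + (∑ j, ((w j)^2/(d3 j)^2) ^ ((3:ℝ)/2) + ∑ j, ((w j)^2/(d4 j)^2) ^ ((3:ℝ)/2)) := by
      simp only [Finset.sum_add_distrib]
    rw [e]
    have m1 : ∑ j, 2 * ((w j)^2/(d1 j)^2) ^ ((3:ℝ)/2)
        = 2 * ∑ j, ((w j)^2/(d1 j)^2) ^ ((3:ℝ)/2) := by rw [Finset.mul_sum]
    have m2 : ∑ j, 2 * ((w j)^2/(d2 j)^2) ^ ((3:ℝ)/2)
        = 2 * ∑ j, ((w j)^2/(d2 j)^2) ^ ((3:ℝ)/2) := by rw [Finset.mul_sum]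
    have m3 : ∑ j, 2 * ((w j)^2/(d3 j)^2) ^ ((3:ℝ)/2)
        = 2 * ∑ j, ((w j)^2/(d3 j)^2) ^ ((3:ℝ)/2) := by rw [Finset.mul_sum]
    have m4 : ∑ j, 2 * ((w j)^2/(d4 j)^2) ^ ((3:ℝ)/2)
        = 2 * ∑ j, ((w j)^2/(d4 j)^2) ^ ((3:ℝ)/2) := by rw [Finset.mul_sum]
    rw [m1] at h1; rw [m2] at h2; rw [m3] at h3; rw [m4] at h4
    linarith [h1, h2, h3, h4]
  have step3 : ∑ j, ((((w j)^2/(d1 j)^2) ^ ((3:ℝ)/2) + ((w j)^2/(d2 j)^2) ^ ((3:ℝ)/2))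
        + (((w j)^2/(d3 j)^2) ^ ((3:ℝ)/2) + ((w j)^2/(d4 j)^2) ^ ((3:ℝ)/2)))
      ≤ (∑ j, (((w j)^2/(d1 j)^2 + (w j)^2/(d2 j)^2)
        + ((w j)^2/(d3 j)^2 + (w j)^2/(d4 j)^2))) ^ ((3:ℝ)/2) := by
    refine le_trans (Finset.sum_le_sum ?_) (sc15_sum_rpow_le _ _ (fun j _ => by positivity))
    intro j _
    have a1 : (0:ℝ) ≤ (w j)^2/(d1 j)^2 := by positivity
    have a2 : (0:ℝ) ≤ (w j)^2/(d2 j)^2 := by positivity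
    have a3 : (0:ℝ) ≤ (w j)^2/(d3 j)^2 := by positivity
    have a4 : (0:ℝ) ≤ (w j)^2/(d4 j)^2 := by positivity
    calc (((w j)^2/(d1 j)^2) ^ ((3:ℝ)/2) + ((w j)^2/(d2 j)^2) ^ ((3:ℝ)/2))
        + (((w j)^2/(d3 j)^2) ^ ((3:ℝ)/2) + ((w j)^2/(d4 j)^2) ^ ((3:ℝ)/2))
        ≤ ((w j)^2/(d1 j)^2 + (w j)^2/(d2 j)^2) ^ ((3:ℝ)/2)
          + ((w j)^2/(d3 j)^2 + (w j)^2/(d4 j)^2) ^ ((3:ℝ)/2) := by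
          gcongr ?_ + ?_
          · exact sc15_two_superadd a1 a2
          · exact sc15_two_superadd a3 a4
      _ ≤ _ := sc15_two_superadd (by positivity) (by positivity)
  have hstep4 := Real.rpow_le_rpow (by positivity) hT (by norm_num : (0:ℝ) ≤ 3/2)
  rw [Real.mul_rpow (by norm_num : (0:ℝ) ≤ 8) hsum0] at hstep4
  have h816 : (16:ℝ) ≤ (8:ℝ) ^ ((3:ℝ)/2) := by
    have hsq : ((8:ℝ) ^ ((3:ℝ)/2)) ^ (2:ℕ) = 8 ^ (3:ℕ) := by
      rw [← Real.rpow_natCast ((8:ℝ) ^ ((3:ℝ)/2)) 2, ← Real.rpow_mul (by norm_num),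
        ← Real.rpow_natCast (8:ℝ) 3]
      norm_num
    nlinarith [Real.rpow_nonneg (by norm_num : (0:ℝ) ≤ 8) ((3:ℝ)/2), hsq]
  have hsum32 : (0:ℝ) ≤ (∑ j, (((w j)^2/(d1 j)^2 + (w j)^2/(d2 j)^2)
        + ((w j)^2/(d3 j)^2 + (w j)^2/(d4 j)^2))) ^ ((3:ℝ)/2) := Real.rpow_nonneg hsum0 _
  calc |8 * (0 + 2 * ((-∑ j, 2*(w j)^3/(d1 j)^3 + ∑ j, 2*(w j)^3/(d2 j)^3)
      + (-∑ j, 2*(w j)^3/(d3 j)^3 + ∑ j, 2*(w j)^3/(d4 j)^3)))|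
      ≤ 32 * ∑ j, ((((w j)^2/(d1 j)^2) ^ ((3:ℝ)/2) + ((w j)^2/(d2 j)^2) ^ ((3:ℝ)/2))
        + (((w j)^2/(d3 j)^2) ^ ((3:ℝ)/2) + ((w j)^2/(d4 j)^2) ^ ((3:ℝ)/2))) :=
      le_trans step1 step2
    _ ≤ 32 * (∑ j, (((w j)^2/(d1 j)^2 + (w j)^2/(d2 j)^2)
        + ((w j)^2/(d3 j)^2 + (w j)^2/(d4 j)^2))) ^ ((3:ℝ)/2) := by linarith [step3]
    _ ≤ 2 * D ^ ((3:ℝ)/2) := by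
      have hmm := mul_le_mul_of_nonneg_right h816 hsum32
      linarith [hstep4, hmm]

end AuxSC15

/-- If `ψ := q̂ + (τ_F/2)·Γ_LR` is convex on `Ω`, then for every
`τ ∈ [τ_F, ∞)` the function `φ²_τ(x) := 8·((2/τ)·q̂(x) + 2·Γ̂(x))` is self-concordant
on `Ω` (in the directional-derivative sense). -/
theorem stmt_15 (n : ℕ) (Q : Matrix (Fin n) (Fin n) ℝ) (hQ : Q.IsSymm)
    (c xL xR : EuclideanSpace ℝ (Fin n)) (Δ τF : ℝ) (hΔ : 0 < Δ) (hτF : 0 < τF)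
    (qhat ΓLR ΓΔ Γhat : EuclideanSpace ℝ (Fin n) → ℝ)
    (hqhat : ∀ x, qhat x = (1 / 2) * ∑ i, ∑ j, Q i j * x i * x j + ∑ i, c i * x i)
    (hΓLR : ∀ x, ΓLR x = -∑ j, (Real.log (x j - xL j) + Real.log (xR j - x j)))
    (hΓΔ : ∀ x, ΓΔ x = -∑ j, (Real.log (Δ + x j) + Real.log (Δ - x j)))
    (hΓhat : ∀ x, Γhat x = ΓLR x + ΓΔ x)
    (B S Ω : Set (EuclideanSpace ℝ (Fin n)))
    (hB : B = {x | ∀ j, xL j < x j ∧ x j < xR j})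
    (hS : S = {x | ∀ j, -Δ < x j ∧ x j < Δ})
    (hΩ : Ω = B ∩ S) (hne : Ω.Nonempty)
    (hψ : ConvexOn ℝ Ω (fun x => qhat x + (τF / 2) * ΓLR x)) :
    ∀ τ : ℝ, τF ≤ τ →
      ∀ x ∈ Ω, ∀ v : EuclideanSpace ℝ (Fin n),
        0 ≤ iteratedFDeriv ℝ 2 (fun y => 8 * ((2 / τ) * qhat y + 2 * Γhat y)) x ![v, v] ∧
        |iteratedFDeriv ℝ 3 (fun y => 8 * ((2 / τ) * qhat y + 2 * Γhat y)) x ![v, v, v]| ≤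
          2 * (iteratedFDeriv ℝ 2 (fun y => 8 * ((2 / τ) * qhat y + 2 * Γhat y)) x
            ![v, v]) ^ ((3 : ℝ) / 2) := by
  intro τ hτ x hx v
  have hτ0 : (0:ℝ) < τ := lt_of_lt_of_le hτF hτ
  have hτne : τ ≠ 0 := ne_of_gt hτ0
  -- coordinate functions
  have hcont : ∀ j : Fin n, Continuous (fun y : EuclideanSpace ℝ (Fin n) => y j) :=
    fun j => (EuclideanSpace.proj j).continuous
  have hcd : ∀ j : Fin n, ContDiff ℝ (⊤ : ℕ∞) (fun y : EuclideanSpace ℝ (Fin n) => y j) :=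
    fun j => by
      have := (EuclideanSpace.proj (𝕜 := ℝ) (ι := Fin n) j).contDiff (n := (⊤ : ℕ∞))
      exact this
  -- Ω is open
  have hΩopen : IsOpen Ω := by
    rw [hΩ, hB, hS]
    have hB1 : {x : EuclideanSpace ℝ (Fin n) | ∀ j, xL j < x j ∧ x j < xR j}
        = ⋂ j, ((fun y : EuclideanSpace ℝ (Fin n) => y j) ⁻¹' Set.Ioo (xL j) (xR j)) := by
      ext y; simp [Set.mem_iInter]
    have hS1 : {x : EuclideanSpace ℝ (Fin n) | ∀ j, -Δ < x j ∧ x j < Δ}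
        = ⋂ j, ((fun y : EuclideanSpace ℝ (Fin n) => y j) ⁻¹' Set.Ioo (-Δ) Δ) := by
      ext y; simp [Set.mem_iInter]
    rw [hB1, hS1]
    exact (isOpen_iInter_of_finite fun j => isOpen_Ioo.preimage (hcont j)).inter
      (isOpen_iInter_of_finite fun j => isOpen_Ioo.preimage (hcont j))
  -- coordinatewise positivity on Ω
  have hposy : ∀ y ∈ Ω, ∀ j, 0 < y j - xL j ∧ 0 < xR j - y j ∧ 0 < Δ + y j ∧ 0 < Δ - y j := by
    intro y hy j
    rw [hΩ, hB, hS] at hy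
    obtain ⟨hy1, hy2⟩ := hy
    obtain ⟨a1, a2⟩ := hy1 j
    obtain ⟨a3, a4⟩ := hy2 j
    exact ⟨by linarith, by linarith, by linarith, by linarith⟩
  -- smoothness of the target function on Ω
  have hsmooth : ContDiffOn ℝ (⊤ : ℕ∞) (fun y => 8 * ((2 / τ) * qhat y + 2 * Γhat y)) Ω := by
    intro y hy
    apply ContDiffAt.contDiffWithinAt
    have h4 := hposy y hy
    have hqc : ContDiffAt ℝ (⊤ : ℕ∞) qhat y := by
      have hq' : ContDiff ℝ (⊤ : ℕ∞) (fun y : EuclideanSpace ℝ (Fin n) =>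
          (1/2) * ∑ i, ∑ j, Q i j * y i * y j + ∑ i, c i * y i) := by
        apply ContDiff.add
        · exact contDiff_const.mul (ContDiff.sum fun i _ =>
            ContDiff.sum fun j _ => (contDiff_const.mul (hcd i)).mul (hcd j))
        · exact ContDiff.sum fun i _ => contDiff_const.mul (hcd i)
      have hfe : qhat = fun y : EuclideanSpace ℝ (Fin n) =>
          (1/2) * ∑ i, ∑ j, Q i j * y i * y j + ∑ i, c i * y i := funext hqhat
      rw [hfe]; exact hq'.contDiffAt
    have hLRc : ContDiffAt ℝ (⊤ : ℕ∞) ΓLR y := by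
      have hfe : ΓLR = fun y : EuclideanSpace ℝ (Fin n) =>
          -∑ j, (Real.log (y j - xL j) + Real.log (xR j - y j)) := funext hΓLR
      rw [hfe]
      apply ContDiffAt.neg
      refine ContDiffAt.sum fun j _ => ContDiffAt.add ?_ ?_
      · exact (Real.contDiffAt_log.mpr (ne_of_gt (h4 j).1)).comp y
          (((hcd j).sub contDiff_const).contDiffAt)
      · exact (Real.contDiffAt_log.mpr (ne_of_gt (h4 j).2.1)).comp y
          ((contDiff_const.sub (hcd j)).contDiffAt)
    have hΔc : ContDiffAt ℝ (⊤ : ℕ∞) ΓΔ y := by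
      have hfe : ΓΔ = fun y : EuclideanSpace ℝ (Fin n) =>
          -∑ j, (Real.log (Δ + y j) + Real.log (Δ - y j)) := funext hΓΔ
      rw [hfe]
      apply ContDiffAt.neg
      refine ContDiffAt.sum fun j _ => ContDiffAt.add ?_ ?_
      · exact (Real.contDiffAt_log.mpr (ne_of_gt (h4 j).2.2.1)).comp y
          ((contDiff_const.add (hcd j)).contDiffAt)
      · exact (Real.contDiffAt_log.mpr (ne_of_gt (h4 j).2.2.2)).comp y
          ((contDiff_const.sub (hcd j)).contDiffAt)
    have hΓc : ContDiffAt ℝ (⊤ : ℕ∞) Γhat y := by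
      have hfe : Γhat = fun y => ΓLR y + ΓΔ y := funext hΓhat
      rw [hfe]; exact hLRc.add hΔc
    exact contDiffAt_const.mul ((contDiffAt_const.mul hqc).add (contDiffAt_const.mul hΓc))
  -- line reduction
  have hlr := sc15_line_reduce hΩopen hx hsmooth v
  have hO : IsOpen ((fun t : ℝ => x + t • v) ⁻¹' Ω) := hΩopen.preimage (by fun_prop)
  have h0 : (0:ℝ) ∈ ((fun t : ℝ => x + t • v) ⁻¹' Ω) := by
    simp [Set.mem_preimage, hx]
  -- positivity along the line
  have hposO : ∀ t ∈ ((fun t : ℝ => x + t • v) ⁻¹' Ω), ∀ j,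
      0 < (x j - xL j) + t * v j ∧ 0 < (xR j - x j) + t * -v j ∧
      0 < (Δ + x j) + t * v j ∧ 0 < (Δ - x j) + t * -v j := by
    intro t ht j
    obtain ⟨a1, a2, a3, a4⟩ := hposy _ ht j
    simp only [PiLp.add_apply, PiLp.smul_apply, smul_eq_mul] at a1 a2 a3 a4
    have hm : t * -v j = -(t * v j) := by ring
    refine ⟨by linarith, ?_, by linarith, ?_⟩
    · rw [hm]; linarith
    · rw [hm]; linarith
  -- log-argument normalizations
  have elog1 : ∀ t : ℝ, ∑ j, Real.log (x j + t * v j - xL j)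
      = ∑ j, Real.log ((x j - xL j) + t * v j) := fun t =>
    Finset.sum_congr rfl fun j _ => by
      rw [show x j + t * v j - xL j = (x j - xL j) + t * v j from by ring]
  have elog2 : ∀ t : ℝ, ∑ j, Real.log (xR j - (x j + t * v j))
      = ∑ j, Real.log ((xR j - x j) + t * -v j) := fun t =>
    Finset.sum_congr rfl fun j _ => by
      rw [show xR j - (x j + t * v j) = (xR j - x j) + t * -v j from by ring]
  have elog3 : ∀ t : ℝ, ∑ j, Real.log (Δ + (x j + t * v j))
      = ∑ j, Real.log ((Δ + x j) + t * v j) := fun t =>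
    Finset.sum_congr rfl fun j _ => by
      rw [show Δ + (x j + t * v j) = (Δ + x j) + t * v j from by ring]
  have elog4 : ∀ t : ℝ, ∑ j, Real.log (Δ - (x j + t * v j))
      = ∑ j, Real.log ((Δ - x j) + t * -v j) := fun t =>
    Finset.sum_congr rfl fun j _ => by
      rw [show Δ - (x j + t * v j) = (Δ - x j) + t * -v j from by ring]
  -- the explicit form of the composite line function
  have hg0eq : (fun t : ℝ => (fun y => 8 * ((2 / τ) * qhat y + 2 * Γhat y)) (x + t • v))
      = fun t : ℝ => 8 * ((2 / τ) * ((1/2) * ∑ i, ∑ j, Q i j * (x i + t * v i) * (x j + t * v j)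
          + ∑ i, c i * (x i + t * v i))
        + 2 * ((-∑ j, Real.log ((x j - xL j) + t * v j)
            + -∑ j, Real.log ((xR j - x j) + t * -v j))
          + (-∑ j, Real.log ((Δ + x j) + t * v j)
            + -∑ j, Real.log ((Δ - x j) + t * -v j)))) := by
    funext t
    show 8 * ((2 / τ) * qhat (x + t • v) + 2 * Γhat (x + t • v)) = _
    rw [hqhat, hΓhat, hΓLR, hΓΔ]
    simp only [PiLp.add_apply, PiLp.smul_apply, smul_eq_mul]
    rw [Finset.sum_add_distrib, Finset.sum_add_distrib, elog1 t, elog2 t, elog3 t, elog4 t]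
    ring
  rw [hg0eq] at hlr
  -- derivative chains along the line
  have hd0 : ∀ t ∈ ((fun t : ℝ => x + t • v) ⁻¹' Ω),
      HasDerivAt (fun t : ℝ => 8 * ((2 / τ) * ((1/2) * ∑ i, ∑ j, Q i j * (x i + t * v i) * (x j + t * v j)
          + ∑ i, c i * (x i + t * v i))
        + 2 * ((-∑ j, Real.log ((x j - xL j) + t * v j)
            + -∑ j, Real.log ((xR j - x j) + t * -v j))
          + (-∑ j, Real.log ((Δ + x j) + t * v j)
            + -∑ j, Real.log ((Δ - x j) + t * -v j)))))
        (8 * ((2 / τ) * ((1/2) * ∑ i, ∑ j, (Q i j * v i * (x j + t * v j)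
            + Q i j * (x i + t * v i) * v j) + ∑ i, c i * v i)
          + 2 * ((-∑ j, v j / ((x j - xL j) + t * v j)
              + -∑ j, -v j / ((xR j - x j) + t * -v j))
            + (-∑ j, v j / ((Δ + x j) + t * v j)
              + -∑ j, -v j / ((Δ - x j) + t * -v j))))) t := by
    intro t ht
    have hp := hposO t ht
    exact (((sc15_quad_d1 Q c x v t).const_mul (2/τ)).add
      ((((sc15_bar_d1 (fun j => x j - xL j) (fun j => v j) (fun j => ne_of_gt (hp j).1)).add
         (sc15_bar_d1 (fun j => xR j - x j) (fun j => -v j) (fun j => ne_of_gt (hp j).2.1))).add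
       ((sc15_bar_d1 (fun j => Δ + x j) (fun j => v j) (fun j => ne_of_gt (hp j).2.2.1)).add
        (sc15_bar_d1 (fun j => Δ - x j) (fun j => -v j)
          (fun j => ne_of_gt (hp j).2.2.2)))).const_mul 2)).const_mul 8
  have hd1 : ∀ t ∈ ((fun t : ℝ => x + t • v) ⁻¹' Ω),
      HasDerivAt (fun t : ℝ => 8 * ((2 / τ) * ((1/2) * ∑ i, ∑ j, (Q i j * v i * (x j + t * v j)
            + Q i j * (x i + t * v i) * v j) + ∑ i, c i * v i)
          + 2 * ((-∑ j, v j / ((x j - xL j) + t * v j)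
              + -∑ j, -v j / ((xR j - x j) + t * -v j))
            + (-∑ j, v j / ((Δ + x j) + t * v j)
              + -∑ j, -v j / ((Δ - x j) + t * -v j)))))
        (8 * ((2 / τ) * ∑ i, ∑ j, Q i j * v i * v j
          + 2 * ((∑ j, v j ^ 2 / ((x j - xL j) + t * v j) ^ 2
              + ∑ j, (-v j) ^ 2 / ((xR j - x j) + t * -v j) ^ 2)
            + (∑ j, v j ^ 2 / ((Δ + x j) + t * v j) ^ 2
              + ∑ j, (-v j) ^ 2 / ((Δ - x j) + t * -v j) ^ 2)))) t := by
    intro t ht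
    have hp := hposO t ht
    exact (((sc15_quad_d2 Q c x v t).const_mul (2/τ)).add
      ((((sc15_bar_d2 (fun j => x j - xL j) (fun j => v j) (fun j => ne_of_gt (hp j).1)).add
         (sc15_bar_d2 (fun j => xR j - x j) (fun j => -v j) (fun j => ne_of_gt (hp j).2.1))).add
       ((sc15_bar_d2 (fun j => Δ + x j) (fun j => v j) (fun j => ne_of_gt (hp j).2.2.1)).add
        (sc15_bar_d2 (fun j => Δ - x j) (fun j => -v j)
          (fun j => ne_of_gt (hp j).2.2.2)))).const_mul 2)).const_mul 8
  have hd2 : ∀ t ∈ ((fun t : ℝ => x + t • v) ⁻¹' Ω),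
      HasDerivAt (fun t : ℝ => 8 * ((2 / τ) * ∑ i, ∑ j, Q i j * v i * v j
          + 2 * ((∑ j, v j ^ 2 / ((x j - xL j) + t * v j) ^ 2
              + ∑ j, (-v j) ^ 2 / ((xR j - x j) + t * -v j) ^ 2)
            + (∑ j, v j ^ 2 / ((Δ + x j) + t * v j) ^ 2
              + ∑ j, (-v j) ^ 2 / ((Δ - x j) + t * -v j) ^ 2))))
        (8 * (0
          + 2 * ((-∑ j, 2 * v j ^ 3 / ((x j - xL j) + t * v j) ^ 3
              + -∑ j, 2 * (-v j) ^ 3 / ((xR j - x j) + t * -v j) ^ 3)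
            + (-∑ j, 2 * v j ^ 3 / ((Δ + x j) + t * v j) ^ 3
              + -∑ j, 2 * (-v j) ^ 3 / ((Δ - x j) + t * -v j) ^ 3)))) t := by
    intro t ht
    have hp := hposO t ht
    exact (((hasDerivAt_const t ((2/τ) * ∑ i, ∑ j, Q i j * v i * v j))).add
      ((((sc15_bar_d3 (fun j => x j - xL j) (fun j => v j) (fun j => ne_of_gt (hp j).1)).add
         (sc15_bar_d3 (fun j => xR j - x j) (fun j => -v j) (fun j => ne_of_gt (hp j).2.1))).add
       ((sc15_bar_d3 (fun j => Δ + x j) (fun j => v j) (fun j => ne_of_gt (hp j).2.2.1)).add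
        (sc15_bar_d3 (fun j => Δ - x j) (fun j => -v j)
          (fun j => ne_of_gt (hp j).2.2.2)))).const_mul 2)).const_mul 8
  have hchain := sc15_deriv_chain hO h0 hd0 hd1 hd2
  -- canonical values at t = 0
  have hI2 : iteratedFDeriv ℝ 2 (fun y => 8 * ((2 / τ) * qhat y + 2 * Γhat y)) x ![v, v]
      = 8 * ((2 / τ) * ∑ i, ∑ j, Q i j * v i * v j
        + 2 * (∑ j, (v j ^ 2 / (x j - xL j) ^ 2 + v j ^ 2 / (xR j - x j) ^ 2)
          + ∑ j, (v j ^ 2 / (Δ + x j) ^ 2 + v j ^ 2 / (Δ - x j) ^ 2))) := by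
    rw [hlr.1, hchain.1]
    simp only [zero_mul, add_zero, neg_sq]
    rw [← Finset.sum_add_distrib, ← Finset.sum_add_distrib]
  have hI3 : iteratedFDeriv ℝ 3 (fun y => 8 * ((2 / τ) * qhat y + 2 * Γhat y)) x ![v, v, v]
      = 8 * (0 + 2 * ((-∑ j, 2 * v j ^ 3 / (x j - xL j) ^ 3
          + ∑ j, 2 * v j ^ 3 / (xR j - x j) ^ 3)
        + (-∑ j, 2 * v j ^ 3 / (Δ + x j) ^ 3
          + ∑ j, 2 * v j ^ 3 / (Δ - x j) ^ 3))) := by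
    rw [hlr.2, hchain.2]
    simp only [zero_mul, add_zero]
    have c2 : ∑ j, 2 * (-v j) ^ 3 / (xR j - x j) ^ 3
        = ∑ j, -(2 * v j ^ 3 / (xR j - x j) ^ 3) :=
      Finset.sum_congr rfl fun j _ => by ring
    have c4 : ∑ j, 2 * (-v j) ^ 3 / (Δ - x j) ^ 3
        = ∑ j, -(2 * v j ^ 3 / (Δ - x j) ^ 3) :=
      Finset.sum_congr rfl fun j _ => by ring
    rw [c2, c4, Finset.sum_neg_distrib, Finset.sum_neg_distrib]
    ring
  -- convexity of the line restriction of ψ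
  have hψ0eq : ∀ t : ℝ, (fun y => qhat y + (τF / 2) * ΓLR y) (x + t • v)
      = (1/2) * ∑ i, ∑ j, Q i j * (x i + t * v i) * (x j + t * v j)
          + ∑ i, c i * (x i + t * v i)
        + (τF / 2) * (-∑ j, Real.log ((x j - xL j) + t * v j)
          + -∑ j, Real.log ((xR j - x j) + t * -v j)) := by
    intro t
    show qhat (x + t • v) + (τF / 2) * ΓLR (x + t • v) = _
    rw [hqhat, hΓLR]
    simp only [PiLp.add_apply, PiLp.smul_apply, smul_eq_mul]
    rw [Finset.sum_add_distrib, elog1 t, elog2 t]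
    ring
  have hkey : ∀ a b wa wb : ℝ, wa + wb = 1 →
      x + (wa * a + wb * b) • v = wa • (x + a • v) + wb • (x + b • v) := by
    intro a b wa wb hw
    have h : wa • (x + a • v) + wb • (x + b • v) = (wa + wb) • x + (wa * a + wb * b) • v := by
      module
    rw [h, hw, one_smul]
  have hψcomp : ConvexOn ℝ ((fun t : ℝ => x + t • v) ⁻¹' Ω)
      (fun t : ℝ => (1/2) * ∑ i, ∑ j, Q i j * (x i + t * v i) * (x j + t * v j)
          + ∑ i, c i * (x i + t * v i)
        + (τF / 2) * (-∑ j, Real.log ((x j - xL j) + t * v j)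
          + -∑ j, Real.log ((xR j - x j) + t * -v j))) := by
    constructor
    · intro a ha b hb wa wb hwa hwb hw
      simp only [Set.mem_preimage] at *
      have : x + (wa • a + wb • b) • v = wa • (x + a • v) + wb • (x + b • v) := by
        rw [smul_eq_mul, smul_eq_mul]
        exact hkey a b wa wb hw
      show x + (wa • a + wb • b) • v ∈ Ω
      rw [this]
      exact hψ.1 ha hb hwa hwb hw
    · intro a ha b hb wa wb hwa hwb hw
      simp only [Set.mem_preimage] at ha hb
      have h2 := hψ.2 ha hb hwa hwb hw
      simp only [smul_eq_mul]
      rw [← hψ0eq (wa * a + wb * b), ← hψ0eq a, ← hψ0eq b]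
      show qhat (x + (wa * a + wb * b) • v) + (τF / 2) * ΓLR (x + (wa * a + wb * b) • v) ≤ _
      rw [hkey a b wa wb hw]
      simpa using h2
  have hψd1 : ∀ t ∈ ((fun t : ℝ => x + t • v) ⁻¹' Ω),
      HasDerivAt (fun t : ℝ => (1/2) * ∑ i, ∑ j, Q i j * (x i + t * v i) * (x j + t * v j)
          + ∑ i, c i * (x i + t * v i)
        + (τF / 2) * (-∑ j, Real.log ((x j - xL j) + t * v j)
          + -∑ j, Real.log ((xR j - x j) + t * -v j)))
        ((1/2) * ∑ i, ∑ j, (Q i j * v i * (x j + t * v j) + Q i j * (x i + t * v i) * v j)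
          + ∑ i, c i * v i
        + (τF / 2) * (-∑ j, v j / ((x j - xL j) + t * v j)
          + -∑ j, -v j / ((xR j - x j) + t * -v j))) t := by
    intro t ht
    have hp := hposO t ht
    exact (sc15_quad_d1 Q c x v t).add
      (((sc15_bar_d1 (fun j => x j - xL j) (fun j => v j) (fun j => ne_of_gt (hp j).1)).add
        (sc15_bar_d1 (fun j => xR j - x j) (fun j => -v j)
          (fun j => ne_of_gt (hp j).2.1))).const_mul (τF / 2))
  have hψd2 : ∀ t ∈ ((fun t : ℝ => x + t • v) ⁻¹' Ω),
      HasDerivAt (fun t : ℝ => (1/2) * ∑ i, ∑ j, (Q i j * v i * (x j + t * v j)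
            + Q i j * (x i + t * v i) * v j) + ∑ i, c i * v i
        + (τF / 2) * (-∑ j, v j / ((x j - xL j) + t * v j)
          + -∑ j, -v j / ((xR j - x j) + t * -v j)))
        (∑ i, ∑ j, Q i j * v i * v j
          + (τF / 2) * (∑ j, v j ^ 2 / ((x j - xL j) + t * v j) ^ 2
            + ∑ j, (-v j) ^ 2 / ((xR j - x j) + t * -v j) ^ 2)) t := by
    intro t ht
    have hp := hposO t ht
    exact (sc15_quad_d2 Q c x v t).add
      (((sc15_bar_d2 (fun j => x j - xL j) (fun j => v j) (fun j => ne_of_gt (hp j).1)).add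
        (sc15_bar_d2 (fun j => xR j - x j) (fun j => -v j)
          (fun j => ne_of_gt (hp j).2.1))).const_mul (τF / 2))
  have hmono := hψcomp.monotoneOn_deriv (fun t ht => (hψd1 t ht).differentiableAt)
  have hmono1 : MonotoneOn (fun t : ℝ => (1/2) * ∑ i, ∑ j, (Q i j * v i * (x j + t * v j)
            + Q i j * (x i + t * v i) * v j) + ∑ i, c i * v i
        + (τF / 2) * (-∑ j, v j / ((x j - xL j) + t * v j)
          + -∑ j, -v j / ((xR j - x j) + t * -v j)))
      ((fun t : ℝ => x + t • v) ⁻¹' Ω) := by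
    intro a ha b hb hab
    have h := hmono ha hb hab
    rw [(hψd1 a ha).deriv, (hψd1 b hb).deriv] at h
    exact h
  have hconvraw := sc15_nonneg_of_monotoneOn hO h0 hmono1 (hψd2 0 h0)
  have e12 : (∑ j, v j ^ 2 / ((x j - xL j) + 0 * v j) ^ 2
      + ∑ j, (-v j) ^ 2 / ((xR j - x j) + 0 * -v j) ^ 2)
      = ∑ j, (v j ^ 2 / (x j - xL j) ^ 2 + v j ^ 2 / (xR j - x j) ^ 2) := by
    simp only [zero_mul, add_zero, neg_sq, Finset.sum_add_distrib]
  rw [e12] at hconvraw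
  -- nonnegativity of barrier parts
  have hp0 := hposy x hx
  have hS12 : (0:ℝ) ≤ ∑ j, (v j ^ 2 / (x j - xL j) ^ 2 + v j ^ 2 / (xR j - x j) ^ 2) := by
    apply Finset.sum_nonneg; intro j _; positivity
  have hS34 : (0:ℝ) ≤ ∑ j, (v j ^ 2 / (Δ + x j) ^ 2 + v j ^ 2 / (Δ - x j) ^ 2) := by
    apply Finset.sum_nonneg; intro j _; positivity
  -- key lower bound for the second derivative
  have hkey2 : 8 * (∑ j, (v j ^ 2 / (x j - xL j) ^ 2 + v j ^ 2 / (xR j - x j) ^ 2)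
      + ∑ j, (v j ^ 2 / (Δ + x j) ^ 2 + v j ^ 2 / (Δ - x j) ^ 2))
      ≤ 8 * ((2 / τ) * ∑ i, ∑ j, Q i j * v i * v j
        + 2 * (∑ j, (v j ^ 2 / (x j - xL j) ^ 2 + v j ^ 2 / (xR j - x j) ^ 2)
          + ∑ j, (v j ^ 2 / (Δ + x j) ^ 2 + v j ^ 2 / (Δ - x j) ^ 2))) := by
    set AA := ∑ i, ∑ j, Q i j * v i * v j with hAA
    set S12 := ∑ j, (v j ^ 2 / (x j - xL j) ^ 2 + v j ^ 2 / (xR j - x j) ^ 2) with hS12d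
    set S34 := ∑ j, (v j ^ 2 / (Δ + x j) ^ 2 + v j ^ 2 / (Δ - x j) ^ 2) with hS34d
    have h1 : 0 ≤ (2 / τ) * (AA + (τF / 2) * S12) := by
      apply mul_nonneg (by positivity) hconvraw
    have hfrac : (2 / τ) * (AA + (τF / 2) * S12) = (2 / τ) * AA + (τF / τ) * S12 := by
      field_simp
    have h2 : (τF / τ) * S12 ≤ 1 * S12 :=
      mul_le_mul_of_nonneg_right ((div_le_one hτ0).mpr hτ) hS12
    rw [hfrac] at h1
    linarith
  constructor
  · rw [hI2]
    linarith [hkey2, hS12, hS34]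
  · rw [hI3, hI2]
    exact sc15_bound (fun j => v j) (fun j => x j - xL j) (fun j => xR j - x j)
      (fun j => Δ + x j) (fun j => Δ - x j)
      (fun j => (hp0 j).1) (fun j => (hp0 j).2.1) (fun j => (hp0 j).2.2.1)
      (fun j => (hp0 j).2.2.2) _ hkey2
end
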